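/- arXiv:2411.01061 — 9 statements merged into one kernel-verified Lean document; each statement's English description precedes it below -/
import Mathlib

section
/- A cyclically orderable matroid is uniformly dense. That is, if a rank-r matroid M on ground set S of size n admits a cyclic ordering s_1, ..., s_n such that every r consecutive elements (cyclically) form a basis, then n * r_M(X) ≥ r * |X| for every subset X of S. -/
/-- The rank of a set `X` in a matroid `M`: the largest cardinality of an
independent subset of `X`. -/
noncomputable def matroidRank {α : Type*} (M : Matroid α) (X : Set α) : ℕ :=
  sSup {n | ∃ I, I ⊆ X ∧ M.Indep I ∧ I.ncard = n}

lemma key_count {α : Type*} [DecidableEq α] (l : List α) (hnd : l.Nodup) (r : ℕ)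
    (hrn : r ≤ l.length) (x : α) (hx : x ∈ l) :
    ((Finset.range l.length).filter
      (fun i => x ∈ ((l.rotate i).take r).toFinset)).card = r := by
  classical
  obtain ⟨j, hj, hxj⟩ := List.getElem_of_mem hx
  have hnpos : 0 < l.length := by omega
  have himg : (Finset.range l.length).filter (fun i => x ∈ ((l.rotate i).take r).toFinset)
      = (Finset.range r).image (fun k => (j + l.length - k) % l.length) := by
    ext i
    simp only [Finset.mem_filter, Finset.mem_range, Finset.mem_image, List.mem_toFinset]
    constructor
    · rintro ⟨hi, hmem⟩
      obtain ⟨k, hk, hxk⟩ := List.getElem_of_mem hmem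
      have hk' : k < r := lt_of_lt_of_le hk (by simp [List.length_take])
      refine ⟨k, hk', ?_⟩
      have hji : (k + i) % l.length = j := by
        have h1 : ((l.rotate i).take r)[k] = x := hxk
        rw [List.getElem_take, List.getElem_rotate, ← hxj] at h1
        exact (hnd.getElem_inj_iff).1 h1
      have hcong : (j + l.length - k) + k ≡ i + k [MOD l.length] := by
        show (j + l.length - k + k) % l.length = (i + k) % l.length
        rw [Nat.sub_add_cancel (by omega), Nat.add_mod_right, ← hji, Nat.mod_mod, Nat.add_comm]
      have := Nat.ModEq.add_right_cancel' k hcong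
      show (j + l.length - k) % l.length = i
      rw [this, Nat.mod_eq_of_lt hi]
    · rintro ⟨k, hk, hki⟩
      subst hki
      refine ⟨Nat.mod_lt _ hnpos, ?_⟩
      have hktake : k < ((l.rotate ((j + l.length - k) % l.length)).take r).length := by
        simp only [List.length_take, List.length_rotate]
        omega
      have hval : ((l.rotate ((j + l.length - k) % l.length)).take r)[k] = x := by
        rw [List.getElem_take, List.getElem_rotate, ← hxj]
        congr 1
        rw [Nat.add_mod_mod, Nat.add_comm, Nat.sub_add_cancel (by omega), Nat.add_mod_right,
          Nat.mod_eq_of_lt hj]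
      exact hval ▸ List.getElem_mem hktake
  rw [himg, Finset.card_image_of_injOn, Finset.card_range]
  intro a ha b hb hab
  simp only [Finset.mem_coe, Finset.mem_range] at ha hb
  have hd : (j + l.length - a) ≡ (j + l.length - b) [MOD l.length] := hab
  rcases le_total a b with h | h
  · have hdvd := (Nat.modEq_iff_dvd' (by omega)).1 hd.symm
    have hle : (j + l.length - a) - (j + l.length - b) = b - a := by omega
    rw [hle] at hdvd
    have hba : b - a < l.length := by omega
    have := Nat.eq_zero_of_dvd_of_lt hdvd hba
    omega
  · have hdvd := (Nat.modEq_iff_dvd' (by omega)).1 hd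
    have hle : (j + l.length - b) - (j + l.length - a) = a - b := by omega
    rw [hle] at hdvd
    have hab' : a - b < l.length := by omega
    have := Nat.eq_zero_of_dvd_of_lt hdvd hab'
    omega

/-- A cyclically orderable matroid is uniformly dense: if a rank-`r` matroid `M`
on a ground set of size `n` admits a cyclic ordering (a list `l` enumerating the
ground set without repetition such that every `r` cyclically consecutive elements
form a basis), then `n * r_M(X) ≥ r * |X|` for every `X ⊆ M.E`. -/
theorem cyclicOrderable_uniformlyDense {α : Type*} [DecidableEq α] (M : Matroid α) (r : ℕ)
    (l : List α)
    (hnd : l.Nodup) (hto : (↑l.toFinset : Set α) = M.E)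
    (hcyc : ∀ i : ℕ, M.IsBase (↑((l.rotate i).take r).toFinset : Set α))
    (hr : matroidRank M M.E = r) :
    ∀ X ⊆ M.E, r * X.ncard ≤ l.length * matroidRank M X := by
  classical
  intro X hX
  have hEfin : M.E.Finite := by rw [← hto]; exact l.toFinset.finite_toSet
  have hXfin : X.Finite := hEfin.subset hX
  have hEcard : M.E.ncard = l.length := by
    rw [← hto, Set.ncard_coe_finset, List.toFinset_card_of_nodup hnd]
  -- bound on members of the rank set
  have hbdd : ∀ Y ⊆ M.E, ∀ k ∈ {n | ∃ I, I ⊆ Y ∧ M.Indep I ∧ I.ncard = n}, k ≤ l.length := by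
    rintro Y hY k ⟨I, hIY, hI, rfl⟩
    rw [← hEcard]
    exact Set.ncard_le_ncard (hIY.trans hY) hEfin
  -- r ≤ l.length
  have hrn : r ≤ l.length := by
    rw [← hr]
    exact csSup_le ⟨0, ∅, by simp⟩ (hbdd M.E le_rfl)
  set Xf := hXfin.toFinset with hXf
  have hXfc : (↑Xf : Set α) = X := hXfin.coe_toFinset
  have hXmem : ∀ x ∈ Xf, x ∈ l := by
    intro x hx
    have : x ∈ X := by rw [← hXfc]; exact_mod_cast hx
    have : x ∈ M.E := hX this
    rw [← hto] at this
    simpa using this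
  -- per-window bound
  have hwin : ∀ i : ℕ, (((l.rotate i).take r).toFinset ∩ Xf).card ≤ matroidRank M X := by
    intro i
    apply le_csSup ⟨l.length, hbdd X hX⟩
    refine ⟨↑(((l.rotate i).take r).toFinset ∩ Xf), ?_, ?_, ?_⟩
    · intro x hx
      simp only [Finset.coe_inter, Set.mem_inter_iff] at hx
      rw [← hXfc]; exact hx.2
    · refine (hcyc i).indep.subset ?_
      intro x hx
      simp only [Finset.coe_inter, Set.mem_inter_iff] at hx
      exact hx.1
    · exact Set.ncard_coe_finset _
  -- counting
  have hcount : ∑ i ∈ Finset.range l.length, (((l.rotate i).take r).toFinset ∩ Xf).card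
      = r * Xf.card := by
    have h1 : ∀ i : ℕ, (((l.rotate i).take r).toFinset ∩ Xf).card
        = (Xf.filter (fun x => x ∈ ((l.rotate i).take r).toFinset)).card := by
      intro i
      congr 1
      ext x
      simp [and_comm]
    calc ∑ i ∈ Finset.range l.length, (((l.rotate i).take r).toFinset ∩ Xf).card
        = ∑ i ∈ Finset.range l.length, ∑ x ∈ Xf,
            if x ∈ ((l.rotate i).take r).toFinset then 1 else 0 := by
          refine Finset.sum_congr rfl fun i _ => ?_
          rw [h1 i, Finset.card_filter]
      _ = ∑ x ∈ Xf, ∑ i ∈ Finset.range l.length,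
            if x ∈ ((l.rotate i).take r).toFinset then 1 else 0 := Finset.sum_comm
      _ = ∑ x ∈ Xf, r := by
          refine Finset.sum_congr rfl fun x hx => ?_
          rw [← Finset.card_filter]
          exact key_count l hnd r hrn x (hXmem x hx)
      _ = r * Xf.card := by rw [Finset.sum_const, smul_eq_mul, mul_comm]
  have hfinal : r * Xf.card ≤ l.length * matroidRank M X := by
    calc r * Xf.card = ∑ i ∈ Finset.range l.length,
          (((l.rotate i).take r).toFinset ∩ Xf).card := hcount.symm
      _ ≤ ∑ _i ∈ Finset.range l.length, matroidRank M X :=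
          Finset.sum_le_sum fun i _ => hwin i
      _ = l.length * matroidRank M X := by simp [Finset.sum_const, Finset.card_range]
  have : X.ncard = Xf.card := by rw [← hXfc, Set.ncard_coe_finset]
  rw [this]
  exact hfinal
end

section
/- A matroid whose ground set can be partitioned into pairwise disjoint bases is uniformly dense. -/
open Set

lemma ncard_iUnion_le' {α : Type*} : ∀ (k : ℕ) (B : Fin k → Set α),
    (∀ i, (B i).Finite) → (⋃ i, B i).ncard ≤ ∑ i, (B i).ncard := by
  intro k
  induction k with
  | zero => simp
  | succ n ih =>
    intro B hfin
    rw [Fin.sum_univ_succ]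
    have hU : (⋃ i, B i) = B 0 ∪ ⋃ i : Fin n, B i.succ := by
      ext x; simp [Fin.exists_fin_succ]
    rw [hU]
    calc (B 0 ∪ ⋃ i : Fin n, B i.succ).ncard
        ≤ (B 0).ncard + (⋃ i : Fin n, B i.succ).ncard :=
          Set.ncard_union_le _ _
      _ ≤ (B 0).ncard + ∑ i : Fin n, (B i.succ).ncard := by
          exact Nat.add_le_add_left (ih _ (fun i => hfin i.succ)) _

lemma sum_le_ncard_iUnion' {α : Type*} : ∀ (k : ℕ) (B : Fin k → Set α),
    (∀ i, (B i).Finite) → (∀ i j, i ≠ j → Disjoint (B i) (B j)) →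
    ∑ i, (B i).ncard ≤ (⋃ i, B i).ncard := by
  intro k
  induction k with
  | zero => simp
  | succ n ih =>
    intro B hfin hdisj
    rw [Fin.sum_univ_succ]
    have hU : (⋃ i, B i) = B 0 ∪ ⋃ i : Fin n, B i.succ := by
      ext x; simp [Fin.exists_fin_succ]
    have hd : Disjoint (B 0) (⋃ i : Fin n, B i.succ) := by
      apply Set.disjoint_iUnion_right.2
      intro i
      exact hdisj 0 i.succ (by simp [Fin.ext_iff])
    rw [hU, Set.ncard_union_eq hd (hfin 0) (Set.finite_iUnion fun i => hfin i.succ)]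
    exact Nat.add_le_add_left
      (ih _ (fun i => hfin i.succ)
        (fun i j hij => hdisj i.succ j.succ (by simpa [Fin.ext_iff] using hij))) _

/-- A matroid whose ground set can be partitioned into pairwise disjoint bases is
uniformly dense: `|S| * r_M(X) ≥ r_M(S) * |X|` for all `X ⊆ S`. -/
theorem partition_into_bases_uniformlyDense {α : Type*} (M : Matroid α)
    (hfin : M.E.Finite) (k : ℕ) (B : Fin k → Set α)
    (hB : ∀ i, M.IsBase (B i))
    (hdisj : ∀ i j, i ≠ j → Disjoint (B i) (B j))
    (hU : (⋃ i, B i) = M.E) :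
    ∀ X ⊆ M.E, matroidRank M M.E * X.ncard ≤ M.E.ncard * matroidRank M X := by
  intro X hX
  have hBfin : ∀ i, (B i).Finite := fun i => hfin.subset (hB i).subset_ground
  -- boundedness of the rank sets
  have hbdd : ∀ Y : Set α, Y ⊆ M.E →
      BddAbove {n | ∃ I, I ⊆ Y ∧ M.Indep I ∧ I.ncard = n} := by
    intro Y hY
    refine ⟨M.E.ncard, ?_⟩
    rintro n ⟨I, hIY, hI, rfl⟩
    exact Set.ncard_le_ncard (hIY.trans hY) hfin
  -- rank of X is at least ncard (X ∩ B i)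
  have hrX : ∀ i, (X ∩ B i).ncard ≤ matroidRank M X := by
    intro i
    apply le_csSup (hbdd X hX)
    exact ⟨X ∩ B i, Set.inter_subset_left, (hB i).indep.inter_left X, rfl⟩
  -- all bases have the same ncard; rank of E is at most a base's ncard
  have hrE : ∀ i, matroidRank M M.E ≤ (B i).ncard := by
    intro i
    refine csSup_le ⟨0, ∅, by simp⟩ ?_
    rintro n ⟨I, hIE, hI, rfl⟩
    obtain ⟨B', hB', hIB'⟩ := hI.exists_isBase_superset
    calc I.ncard ≤ B'.ncard :=
          Set.ncard_le_ncard hIB' (hfin.subset hB'.subset_ground)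
      _ = (B i).ncard := hB'.ncard_eq_ncard_of_isBase (hB i)
  -- |X| ≤ k * rank X
  have hXcard : X.ncard ≤ k * matroidRank M X := by
    have h1 : X = ⋃ i, X ∩ B i := by
      rw [← Set.inter_iUnion, hU, Set.inter_eq_left.2 hX]
    calc X.ncard = (⋃ i, X ∩ B i).ncard := by rw [← h1]
      _ ≤ ∑ i, (X ∩ B i).ncard :=
          ncard_iUnion_le' k _ (fun i => (hBfin i).inter_of_right X)
      _ ≤ ∑ _i : Fin k, matroidRank M X := Finset.sum_le_sum (fun i _ => hrX i)
      _ = k * matroidRank M X := by simp [mul_comm]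
  -- k * (B i).ncard ≤ |E|
  have hkr : ∀ i, k * (B i).ncard ≤ M.E.ncard := by
    intro i
    calc k * (B i).ncard = ∑ j : Fin k, (B j).ncard := by
          rw [Finset.sum_congr rfl (fun j _ => (hB j).ncard_eq_ncard_of_isBase (hB i))]
          simp [mul_comm]
      _ ≤ (⋃ j, B j).ncard := sum_le_ncard_iUnion' k B hBfin hdisj
      _ = M.E.ncard := by rw [hU]
  rcases Nat.eq_zero_or_pos k with hk | hk
  · subst hk
    have : M.E = ∅ := by rw [← hU]; simp
    have hXe : X = ∅ := Set.subset_eq_empty hX this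
    simp [hXe]
  · have i0 : Fin k := ⟨0, hk⟩
    calc matroidRank M M.E * X.ncard
        ≤ (B i0).ncard * (k * matroidRank M X) :=
          Nat.mul_le_mul (hrE i0) hXcard
      _ = (k * (B i0).ncard) * matroidRank M X := by ring
      _ ≤ M.E.ncard * matroidRank M X := Nat.mul_le_mul_right _ (hkr i0)
end

section
/- The ground set of a matroid M can be covered by k bases if and only if k * r_M(X) ≥ |X| holds for every subset X of the ground set. -/
namespace CoverAux

open Set

variable {α : Type*} {M : Matroid α} {X Y I J : Set α}

lemma bddAbove_rk (hX : X.Finite) :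
    BddAbove {n | ∃ I, I ⊆ X ∧ M.Indep I ∧ I.ncard = n} := by
  refine ⟨X.ncard, ?_⟩
  rintro n ⟨I, hIX, -, rfl⟩
  exact Set.ncard_le_ncard hIX hX

lemma ncard_le_rank (hX : X.Finite) (hIX : I ⊆ X) (hI : M.Indep I) :
    I.ncard ≤ matroidRank M X :=
  le_csSup (bddAbove_rk hX) ⟨I, hIX, hI, rfl⟩

lemma rank_eq_of_basis' (hX : X.Finite) (hI : M.IsBasis' I X) :
    matroidRank M X = I.ncard := by
  refine le_antisymm (csSup_le ⟨0, ∅, by simp⟩ ?_) (ncard_le_rank hX hI.subset hI.indep)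
  rintro n ⟨J, hJX, hJ, rfl⟩
  obtain ⟨J', hJ', hJJ'⟩ := hJ.subset_isBasis'_of_subset hJX
  have hcard := hJ'.encard_eq_encard hI
  have h1 : J.ncard ≤ J'.ncard :=
    Set.ncard_le_ncard hJJ' (hX.subset hJ'.subset)
  have h2 : J'.ncard = I.ncard := by
    simp only [Set.ncard_def, hcard]
  omega

lemma rank_le_ncard (hX : X.Finite) : matroidRank M X ≤ X.ncard := by
  refine csSup_le ⟨0, ∅, by simp⟩ ?_
  rintro n ⟨I, hIX, -, rfl⟩
  exact Set.ncard_le_ncard hIX hX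

lemma rank_mono (hY : Y.Finite) (hXY : X ⊆ Y) : matroidRank M X ≤ matroidRank M Y := by
  refine csSup_le ⟨0, ∅, by simp⟩ ?_
  rintro n ⟨I, hIX, hI, rfl⟩
  exact ncard_le_rank hY (hIX.trans hXY) hI

lemma indep_of_rank_eq (hX : X.Finite) (h : matroidRank M X = X.ncard) : M.Indep X := by
  obtain ⟨I, hI⟩ := M.exists_isBasis' X
  have hr := rank_eq_of_basis' hX hI
  have : I = X := Set.eq_of_subset_of_ncard_le hI.subset (by omega) hX
  exact this ▸ hI.indep

lemma indep_rank_eq (hX : X.Finite) (h : M.Indep X) : matroidRank M X = X.ncard :=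
  le_antisymm (rank_le_ncard hX) (ncard_le_rank hX Subset.rfl h)

lemma rank_submod (hX : X.Finite) (hY : Y.Finite) :
    matroidRank M (X ∪ Y) + matroidRank M (X ∩ Y) ≤ matroidRank M X + matroidRank M Y := by
  obtain ⟨I, hI⟩ := M.exists_isBasis' (X ∩ Y)
  obtain ⟨J, hJ, hIJ⟩ := hI.indep.subset_isBasis'_of_subset
    (hI.subset.trans (Set.inter_subset_left.trans Set.subset_union_left))
  have hXYfin : (X ∪ Y).Finite := hX.union hY
  have hJfin : J.Finite := hXYfin.subset hJ.subset
  -- J ∩ (X ∩ Y) = I by maximality of I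
  have hJXY : J ∩ (X ∩ Y) = I := by
    refine subset_antisymm (hI.2 ⟨hJ.indep.subset Set.inter_subset_left,
      Set.inter_subset_right⟩ (Set.subset_inter hIJ hI.subset)) (Set.subset_inter hIJ hI.subset)
  have h1 : (J ∩ X).ncard ≤ matroidRank M X :=
    ncard_le_rank hX Set.inter_subset_right (hJ.indep.subset Set.inter_subset_left)
  have h2 : (J ∩ Y).ncard ≤ matroidRank M Y :=
    ncard_le_rank hY Set.inter_subset_right (hJ.indep.subset Set.inter_subset_left)
  have hu : (J ∩ X) ∪ (J ∩ Y) = J := by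
    rw [← Set.inter_union_distrib_left]
    exact Set.inter_eq_self_of_subset_left hJ.subset
  have hi : (J ∩ X) ∩ (J ∩ Y) = I := by
    rw [← hJXY]; ext a; simp; tauto
  have hcard : (J ∩ X).ncard + (J ∩ Y).ncard = J.ncard + I.ncard := by
    have h9 := Set.ncard_union_add_ncard_inter (J ∩ X) (J ∩ Y)
      (hJfin.subset Set.inter_subset_left) (hJfin.subset Set.inter_subset_left)
    rw [hu, hi] at h9
    omega
  have hrU : matroidRank M (X ∪ Y) = J.ncard := rank_eq_of_basis' hXYfin hJ
  have hrI : matroidRank M (X ∩ Y) = I.ncard :=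
    rank_eq_of_basis' (hX.subset Set.inter_subset_left) hI
  omega

/-- Rado's theorem for an abstract monotone submodular rank function on finsets:
if every subfamily `J` of the family `A` satisfies `|J| ≤ r (⋃_{i ∈ J} A i)`, then
there is a system of representatives `f` with `r (f '' s) ≥ |s|`. -/
lemma rado {ι β : Type*} [DecidableEq ι] [DecidableEq β] [Nonempty β]
    (r : Finset β → ℕ)
    (hle : ∀ X, r X ≤ X.card)
    (hmono : ∀ X Y, X ⊆ Y → r X ≤ r Y)
    (hsub : ∀ X Y, r (X ∪ Y) + r (X ∩ Y) ≤ r X + r Y) :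
    ∀ (n : ℕ) (s : Finset ι) (A : ι → Finset β), (∑ i ∈ s, (A i).card = n) →
    (∀ J ⊆ s, J.card ≤ r (J.biUnion A)) →
    ∃ f : ι → β, (∀ i ∈ s, f i ∈ A i) ∧ s.card ≤ r (s.image f) := by
  intro n
  induction n using Nat.strong_induction_on with
  | _ n IH =>
  intro s A hn h
  classical
  by_cases hsing : ∀ i ∈ s, (A i).card ≤ 1
  · -- base case: all sets are singletons
    have hone : ∀ i ∈ s, ∃ a, A i = {a} := by
      intro i hi
      have h1 : 1 ≤ r (A i) := by
        have := h {i} (by simpa using hi)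
        simpa using this
      have h2 : 1 ≤ (A i).card := le_trans h1 (hle _)
      exact Finset.card_eq_one.1 (le_antisymm (hsing i hi) h2)
    choose g hg using hone
    set f : ι → β := fun i => if hi : i ∈ s then g i hi else Classical.arbitrary β with hf
    refine ⟨f, fun i hi => by simp [hf, hi, hg i hi], ?_⟩
    have himg : s.image f = s.biUnion A := by
      ext b
      simp only [Finset.mem_image, Finset.mem_biUnion]
      constructor
      · rintro ⟨i, hi, rfl⟩
        exact ⟨i, hi, by simp [hf, hi, hg i hi]⟩
      · rintro ⟨i, hi, hb⟩
        refine ⟨i, hi, ?_⟩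
        rw [hg i hi, Finset.mem_singleton] at hb
        simp [hf, hi, hb]
    rw [himg]
    exact h s Finset.Subset.rfl
  · push_neg at hsing
    obtain ⟨i₀, hi₀s, hcard⟩ := hsing
    obtain ⟨x, hx, y, hy, hxy⟩ := Finset.one_lt_card.1 hcard
    have hstep : ∀ z ∈ A i₀,
        (∀ J ⊆ s, J.card ≤ r (J.biUnion (Function.update A i₀ ((A i₀).erase z)))) →
        ∃ f : ι → β, (∀ i ∈ s, f i ∈ A i) ∧ s.card ≤ r (s.image f) := by
      intro z hz hcond
      set A' := Function.update A i₀ ((A i₀).erase z) with hA'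
      have hm : ∑ i ∈ s, (A' i).card < n := by
        rw [← hn]
        refine Finset.sum_lt_sum (fun i _ => ?_) ⟨i₀, hi₀s, ?_⟩
        · by_cases hii : i = i₀
          · subst hii; simp [hA', Finset.card_le_card (Finset.erase_subset _ _)]
          · simp [hA', Function.update_of_ne hii]
        · have : (A i₀).Nonempty := ⟨z, hz⟩
          simp only [hA', Function.update_self]
          rw [Finset.card_erase_of_mem hz]
          omega
      obtain ⟨f, hf1, hf2⟩ := IH _ hm s A' rfl hcond
      refine ⟨f, fun i hi => ?_, hf2⟩
      have := hf1 i hi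
      by_cases hii : i = i₀
      · subst hii
        exact Finset.erase_subset _ _ (by simpa [hA'] using this)
      · simpa [hA', Function.update_of_ne hii] using this
    by_cases hc1 : ∀ J ⊆ s, J.card ≤ r (J.biUnion (Function.update A i₀ ((A i₀).erase x)))
    · exact hstep x hx hc1
    by_cases hc2 : ∀ J ⊆ s, J.card ≤ r (J.biUnion (Function.update A i₀ ((A i₀).erase y)))
    · exact hstep y hy hc2
    exfalso
    push_neg at hc1 hc2
    obtain ⟨J, hJs, hJ⟩ := hc1
    obtain ⟨K, hKs, hK⟩ := hc2
    set A₁ := Function.update A i₀ ((A i₀).erase x) with hA₁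
    set A₂ := Function.update A i₀ ((A i₀).erase y) with hA₂
    have hiJ : i₀ ∈ J := by
      by_contra hiJ
      refine absurd (h J hJs) (not_le.2 ?_)
      have : J.biUnion A₁ = J.biUnion A := by
        refine Finset.biUnion_congr rfl (fun j hj => ?_)
        have : j ≠ i₀ := fun hji => hiJ (hji ▸ hj)
        simp [hA₁, Function.update_of_ne this]
      rwa [← this]
    have hiK : i₀ ∈ K := by
      by_contra hiK
      refine absurd (h K hKs) (not_le.2 ?_)
      have : K.biUnion A₂ = K.biUnion A := by
        refine Finset.biUnion_congr rfl (fun j hj => ?_)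
        have : j ≠ i₀ := fun hji => hiK (hji ▸ hj)
        simp [hA₂, Function.update_of_ne this]
      rwa [← this]
    set P := J.biUnion A₁ with hP
    set Q := K.biUnion A₂ with hQ
    have hPQu : (J ∪ K).biUnion A ⊆ P ∪ Q := by
      intro b hb
      obtain ⟨j, hj, hbj⟩ := Finset.mem_biUnion.1 hb
      rw [Finset.mem_union] at hj
      rw [Finset.mem_union]
      by_cases hji : j = i₀
      · subst hji
        by_cases hbx : b = x
        · subst hbx
          exact Or.inr (Finset.mem_biUnion.2 ⟨j, hiK, by
            simp [hA₂, Finset.mem_erase, hxy, hbj]⟩)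
        · exact Or.inl (Finset.mem_biUnion.2 ⟨j, hiJ, by
            simp [hA₁, Finset.mem_erase, hbx, hbj]⟩)
      · rcases hj with hj | hj
        · exact Or.inl (Finset.mem_biUnion.2 ⟨j, hj, by
            simp [hA₁, Function.update_of_ne hji, hbj]⟩)
        · exact Or.inr (Finset.mem_biUnion.2 ⟨j, hj, by
            simp [hA₂, Function.update_of_ne hji, hbj]⟩)
    have hPQi : ((J ∩ K).erase i₀).biUnion A ⊆ P ∩ Q := by
      intro b hb
      obtain ⟨j, hj, hbj⟩ := Finset.mem_biUnion.1 hb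
      obtain ⟨hji, hjJK⟩ := Finset.mem_erase.1 hj
      rw [Finset.mem_inter] at hjJK
      refine Finset.mem_inter.2 ⟨Finset.mem_biUnion.2 ⟨j, hjJK.1, ?_⟩,
        Finset.mem_biUnion.2 ⟨j, hjJK.2, ?_⟩⟩
      · simp [hA₁, Function.update_of_ne hji, hbj]
      · simp [hA₂, Function.update_of_ne hji, hbj]
    have h4 : (J ∪ K).card ≤ r (P ∪ Q) :=
      le_trans (h _ (Finset.union_subset hJs hKs)) (hmono _ _ hPQu)
    have h5 : ((J ∩ K).erase i₀).card ≤ r (P ∩ Q) :=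
      le_trans (h _ (((Finset.erase_subset _ _).trans Finset.inter_subset_left).trans hJs))
        (hmono _ _ hPQi)
    have h6 : ((J ∩ K).erase i₀).card = (J ∩ K).card - 1 :=
      Finset.card_erase_of_mem (Finset.mem_inter.2 ⟨hiJ, hiK⟩)
    have h7 : 1 ≤ (J ∩ K).card :=
      Finset.card_pos.2 ⟨i₀, Finset.mem_inter.2 ⟨hiJ, hiK⟩⟩
    have h8 := Finset.card_union_add_card_inter J K
    have h3 := hsub P Q
    omega

section Product

variable [DecidableEq α] {k : ℕ}

/-- The `i`-th fiber of a finset of pairs. -/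
def Fib (i : Fin k) (T : Finset (α × Fin k)) : Finset α :=
  (T.filter (fun p => p.2 = i)).image Prod.fst

lemma mem_Fib {i : Fin k} {T : Finset (α × Fin k)} {a : α} :
    a ∈ Fib i T ↔ (a, i) ∈ T := by
  simp only [Fib, Finset.mem_image, Finset.mem_filter]
  constructor
  · rintro ⟨⟨b, j⟩, ⟨hT, rfl⟩, rfl⟩; exact hT
  · intro hT; exact ⟨(a, i), ⟨hT, rfl⟩, rfl⟩

lemma sum_card_Fib (T : Finset (α × Fin k)) :
    ∑ i : Fin k, (Fib i T).card = T.card := by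
  have h1 : ∀ i : Fin k, (Fib i T).card = (T.filter (fun p => p.2 = i)).card := by
    intro i
    refine Finset.card_image_of_injOn ?_
    rintro ⟨a, j⟩ ha ⟨b, j'⟩ hb hab
    simp only [Finset.mem_coe, Finset.mem_filter] at ha hb
    simp only at hab
    exact Prod.ext hab (ha.2.trans hb.2.symm)
  rw [Finset.sum_congr rfl (fun i _ => h1 i)]
  exact (Finset.card_eq_sum_card_fiberwise (f := Prod.snd) (t := Finset.univ)
    (fun x _ => Finset.mem_univ _)).symm

/-- The rank function of the `k`-fold direct sum, restricted to finsets. -/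
noncomputable def prodRank (M : Matroid α) (k : ℕ) (T : Finset (α × Fin k)) : ℕ :=
  ∑ i : Fin k, matroidRank M ↑(Fib i T)

lemma prodRank_le_card (M : Matroid α) (T : Finset (α × Fin k)) :
    prodRank M k T ≤ T.card := by
  rw [← sum_card_Fib T]
  refine Finset.sum_le_sum (fun i _ => ?_)
  simpa [Set.ncard_coe_finset] using rank_le_ncard (M := M) (Fib i T).finite_toSet

lemma prodRank_mono (M : Matroid α) {T U : Finset (α × Fin k)} (h : T ⊆ U) :
    prodRank M k T ≤ prodRank M k U := by
  refine Finset.sum_le_sum (fun i _ => ?_)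
  refine rank_mono (Fib i U).finite_toSet ?_
  intro a ha
  simp only [Finset.mem_coe, mem_Fib] at ha ⊢
  exact h ha

lemma Fib_union (i : Fin k) (T U : Finset (α × Fin k)) :
    Fib i (T ∪ U) = Fib i T ∪ Fib i U := by
  ext a; simp [mem_Fib]

lemma Fib_inter (i : Fin k) (T U : Finset (α × Fin k)) :
    Fib i (T ∩ U) = Fib i T ∩ Fib i U := by
  ext a; simp [mem_Fib]

lemma prodRank_submod (M : Matroid α) (T U : Finset (α × Fin k)) :
    prodRank M k (T ∪ U) + prodRank M k (T ∩ U) ≤ prodRank M k T + prodRank M k U := by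
  unfold prodRank
  rw [← Finset.sum_add_distrib, ← Finset.sum_add_distrib]
  refine Finset.sum_le_sum (fun i _ => ?_)
  rw [Fib_union, Fib_inter, Finset.coe_union, Finset.coe_inter]
  exact rank_submod (Fib i T).finite_toSet (Fib i U).finite_toSet

end Product

end CoverAux

open CoverAux Set in
/-- Base-covering form of the matroid union theorem (Edmonds–Fulkerson): the
ground set of a matroid can be covered by `k` bases if and only if
`k * r_M(X) ≥ |X|` for every subset `X` of the ground set. -/
theorem cover_by_k_bases_iff {α : Type*} (M : Matroid α) (hfin : M.E.Finite)
    (k : ℕ) (hk : 0 < k) :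
    (∃ B : Fin k → Set α, (∀ i, M.IsBase (B i)) ∧ M.E ⊆ ⋃ i, B i) ↔
      ∀ X ⊆ M.E, X.ncard ≤ k * matroidRank M X := by
  classical
  constructor
  · rintro ⟨B, hB, hcov⟩ X hXE
    have hX : X.Finite := hfin.subset hXE
    have hXi : ∀ i, (X ∩ B i).Finite := fun i => hX.subset inter_subset_left
    -- X is covered by the sets X ∩ B i
    have h1 : X ⊆ ⋃ i, X ∩ B i := by
      intro a ha
      obtain ⟨i, hi⟩ := mem_iUnion.1 (hcov (hXE ha))
      exact mem_iUnion.2 ⟨i, ha, hi⟩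
    -- card bound for finite unions
    have h2 : X.ncard ≤ ∑ i : Fin k, (X ∩ B i).ncard := by
      have hUeq : (⋃ i, X ∩ B i) = ↑(Finset.univ.biUnion (fun i => (hXi i).toFinset)) := by
        ext a; simp [Set.Finite.mem_toFinset]
      calc X.ncard ≤ (⋃ i, X ∩ B i).ncard := by
            refine Set.ncard_le_ncard h1 ?_
            rw [hUeq]; exact (Finset.univ.biUnion _).finite_toSet
        _ ≤ ∑ i : Fin k, (X ∩ B i).ncard := by
            rw [hUeq, Set.ncard_coe_finset]
            refine le_trans (Finset.card_biUnion_le) ?_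
            refine Finset.sum_le_sum (fun i _ => ?_)
            exact le_of_eq (Set.ncard_eq_toFinset_card _ (hXi i)).symm
    refine le_trans h2 ?_
    have h3 : ∀ i : Fin k, (X ∩ B i).ncard ≤ matroidRank M X := fun i =>
      ncard_le_rank hX inter_subset_left ((hB i).indep.subset inter_subset_right)
    calc ∑ i : Fin k, (X ∩ B i).ncard ≤ ∑ _i : Fin k, matroidRank M X :=
          Finset.sum_le_sum (fun i _ => h3 i)
      _ = k * matroidRank M X := by simp [Finset.sum_const, mul_comm]
  · intro h
    rcases M.E.eq_empty_or_nonempty with hE | ⟨e₀, he₀⟩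
    · obtain ⟨B₀, hB₀⟩ := M.exists_isBase
      exact ⟨fun _ => B₀, fun _ => hB₀, by simp [hE]⟩
    haveI : Nonempty α := ⟨e₀⟩
    haveI : Nonempty (Fin k) := ⟨⟨0, hk⟩⟩
    set s : Finset α := hfin.toFinset with hs
    set A : α → Finset (α × Fin k) := fun e => Finset.univ.image (fun i : Fin k => (e, i))
      with hA
    have hFibbi : ∀ (J : Finset α) (i : Fin k), Fib i (J.biUnion A) = J := by
      intro J i
      ext a
      simp only [mem_Fib, Finset.mem_biUnion, hA, Finset.mem_image, Finset.mem_univ,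
        true_and]
      constructor
      · rintro ⟨e, he, j, hj⟩
        have h1 : e = a := congrArg Prod.fst hj
        subst h1; exact he
      · intro ha; exact ⟨a, ha, i, rfl⟩
    have hcond : ∀ J ⊆ s, J.card ≤ prodRank M k (J.biUnion A) := by
      intro J hJ
      have hJE : ↑J ⊆ M.E := by
        intro a ha
        have := hJ ha
        rwa [hs, Set.Finite.mem_toFinset] at this
      have := h ↑J hJE
      rw [Set.ncard_coe_finset] at this
      refine le_trans this ?_
      unfold prodRank
      rw [Finset.sum_congr rfl (fun i _ => by rw [hFibbi J i])]
      simp [Finset.sum_const, mul_comm]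
    obtain ⟨f, hf1, hf2⟩ := rado (prodRank M k) (prodRank_le_card M)
      (fun T U hTU => prodRank_mono M hTU) (prodRank_submod M)
      (∑ i ∈ s, (A i).card) s A rfl hcond
    set T : Finset (α × Fin k) := s.image f with hT
    -- all the inequalities collapse
    have hchain : prodRank M k T = T.card := by
      have h1 : T.card ≤ s.card := Finset.card_image_le
      have h2 := prodRank_le_card M T
      omega
    have hterm : ∀ i : Fin k, matroidRank M ↑(Fib i T) = (Fib i T).card := by
      have hsum : ∑ i : Fin k, matroidRank M ↑(Fib i T) = ∑ i : Fin k, (Fib i T).card := by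
        rw [sum_card_Fib]; exact hchain
      have hle' : ∀ i ∈ Finset.univ, matroidRank M ↑(Fib i T) ≤ (Fib i T).card := by
        intro i _
        simpa [Set.ncard_coe_finset] using rank_le_ncard (M := M) (Fib i T).finite_toSet
      intro i
      exact (Finset.sum_eq_sum_iff_of_le hle').1 hsum i (Finset.mem_univ i)
    have hindep : ∀ i : Fin k, M.Indep ↑(Fib i T) := by
      intro i
      refine indep_of_rank_eq (Fib i T).finite_toSet ?_
      rw [hterm i, Set.ncard_coe_finset]
    choose B hB hFB using fun i => (hindep i).exists_isBase_superset
    refine ⟨B, hB, ?_⟩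
    intro e he
    have hes : e ∈ s := by rwa [hs, Set.Finite.mem_toFinset]
    have hfe := hf1 e hes
    rw [hA] at hfe
    simp only [Finset.mem_image, Finset.mem_univ, true_and] at hfe
    obtain ⟨i, hi⟩ := hfe
    have heT : (e, i) ∈ T := by
      rw [hT, hi]
      exact Finset.mem_image_of_mem f hes
    have : e ∈ Fib i T := mem_Fib.2 heT
    exact mem_iUnion.2 ⟨i, hFB i this⟩
end

section
/- Let S be a finite set with |S| ≥ r, let H_1, ..., H_q be subsets of S, and let r, r_1, ..., r_q be nonnegative integers satisfying |H_i ∩ H_j| ≤ r_i + r_j − r for all distinct i, j and |S − H_i| + r_i ≥ r for all i. Then the family B = {X ⊆ S : |X| = r and |X ∩ H_i| ≤ r_i for all i} is the family of bases of a matroid on S (in particular B is nonempty and satisfies the basis exchange axiom). -/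
open Finset

/-- Submodularity-style counting inequality. -/
private lemma elemSplit_submod {α : Type*} [DecidableEq α] (Z A B : Finset α) :
    (Z ∩ A).card + (Z ∩ B).card ≤ (A ∩ B).card + Z.card := by
  have h := Finset.card_inter_add_card_union (Z ∩ A) (Z ∩ B)
  have h1 : (Z ∩ A) ∩ (Z ∩ B) ⊆ A ∩ B := by
    intro x hx; simp only [mem_inter] at hx ⊢; tauto
  have h2 : (Z ∩ A) ∪ (Z ∩ B) ⊆ Z := by
    intro x hx; simp only [mem_union, mem_inter] at hx ⊢; tauto
  have := Finset.card_le_card h1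
  have := Finset.card_le_card h2
  omega

/-- Nonemptiness part. -/
private lemma elemSplit_exists {α : Type*} [DecidableEq α]
    (S : Finset α) (q r : ℕ) (H : Fin q → Finset α) (ri : Fin q → ℕ)
    (hSr : r ≤ S.card)
    (h1 : ∀ i j, i ≠ j → (H i ∩ H j).card + r ≤ ri i + ri j)
    (h2 : ∀ i, r ≤ (S \ H i).card + ri i) :
    ∃ X : Finset α, X ⊆ S ∧ X.card = r ∧ ∀ i, (X ∩ H i).card ≤ ri i := by
  obtain ⟨X0, hX0S, hX0card⟩ := Finset.exists_subset_card_eq hSr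
  suffices h : ∀ n (X : Finset α), X ⊆ S → X.card = r →
      (∀ j, (X ∩ H j).card ≤ ri j + n) →
      ∃ X', X' ⊆ S ∧ X'.card = r ∧ ∀ i, (X' ∩ H i).card ≤ ri i by
    refine h r X0 hX0S hX0card ?_
    intro j
    have : (X0 ∩ H j).card ≤ r := hX0card ▸ Finset.card_le_card Finset.inter_subset_left
    omega
  intro n
  induction n with
  | zero =>
    intro X hXS hXc hb
    exact ⟨X, hXS, hXc, fun j => by have := hb j; omega⟩
  | succ n ih =>
    intro X hXS hXc hb
    by_cases hall : ∀ j, (X ∩ H j).card ≤ ri j + n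
    · exact ih X hXS hXc hall
    push_neg at hall
    obtain ⟨i0, hi0⟩ := hall
    have hviol : ri i0 < (X ∩ H i0).card := by omega
    have hne : (X ∩ H i0).Nonempty := Finset.card_pos.mp (by omega)
    obtain ⟨x, hx⟩ := hne
    have hxX : x ∈ X := (Finset.mem_inter.mp hx).1
    have hcard1 : (X \ H i0).card + (X ∩ H i0).card = X.card :=
      Finset.card_sdiff_add_card_inter X (H i0)
    have hinterr : (X ∩ H i0).card ≤ r := hXc ▸ Finset.card_le_card Finset.inter_subset_left
    obtain ⟨s, hsS, hsX⟩ : ∃ s, s ∈ S \ H i0 ∧ s ∉ X \ H i0 := by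
      by_contra hcon
      push_neg at hcon
      have hsub : S \ H i0 ⊆ X \ H i0 := fun t ht => hcon t ht
      have := Finset.card_le_card hsub
      have := h2 i0
      omega
    have hsH : s ∉ H i0 := (Finset.mem_sdiff.mp hsS).2
    have hsnX : s ∉ X := by
      intro hsX'
      exact hsX (Finset.mem_sdiff.mpr ⟨hsX', hsH⟩)
    set X' := insert s (X.erase x) with hX'def
    have hsne : s ∉ X.erase x := fun h => hsnX (Finset.mem_of_mem_erase h)
    have hX'S : X' ⊆ S := by
      refine Finset.insert_subset ((Finset.mem_sdiff.mp hsS).1) ?_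
      exact (Finset.erase_subset x X).trans hXS
    have hrpos : 1 ≤ r := by omega
    have hX'c : X'.card = r := by
      rw [hX'def, Finset.card_insert_of_notMem hsne, Finset.card_erase_of_mem hxX]
      omega
    -- intersection with H i0 decreases by one
    have hXi0' : (X' ∩ H i0).card + 1 = (X ∩ H i0).card := by
      have : X' ∩ H i0 = (X ∩ H i0).erase x := by
        rw [hX'def, Finset.insert_inter_of_notMem hsH, Finset.erase_inter]
      rw [this, Finset.card_erase_of_mem hx]
      omega
    -- other intersections grow by at most one
    have hgrow : ∀ j, (X' ∩ H j).card ≤ (X ∩ H j).card + 1 := by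
      intro j
      have hsub : X' ∩ H j ⊆ insert s (X ∩ H j) := by
        intro t ht
        simp only [hX'def, mem_inter, mem_insert, mem_erase] at ht ⊢
        tauto
      calc (X' ∩ H j).card ≤ (insert s (X ∩ H j)).card := Finset.card_le_card hsub
        _ ≤ (X ∩ H j).card + 1 := Finset.card_insert_le _ _
    refine ih X' hX'S hX'c ?_
    intro j
    by_cases hji : j = i0
    · subst hji
      have := hb j
      omega
    · -- show (X' ∩ H j).card ≤ ri j
      by_contra hcon
      push_neg at hcon
      have hsm := elemSplit_submod X' (H i0) (H j)
      have hh1 := h1 i0 j (fun h => hji h.symm)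
      omega

/-- Exchange part. -/
private lemma elemSplit_exchange {α : Type*} [DecidableEq α]
    (S : Finset α) (q r : ℕ) (H : Fin q → Finset α) (ri : Fin q → ℕ)
    (h1 : ∀ i j, i ≠ j → (H i ∩ H j).card + r ≤ ri i + ri j)
    (X Y : Finset α)
    (hX : X ⊆ S ∧ X.card = r ∧ ∀ i, (X ∩ H i).card ≤ ri i)
    (hY : Y ⊆ S ∧ Y.card = r ∧ ∀ i, (Y ∩ H i).card ≤ ri i)
    (e : α) (he : e ∈ X \ Y) :
    ∃ f ∈ Y \ X, insert f (X.erase e) ⊆ S ∧ (insert f (X.erase e)).card = r ∧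
      ∀ i, (insert f (X.erase e) ∩ H i).card ≤ ri i := by
  obtain ⟨hXS, hXc, hXb⟩ := hX
  obtain ⟨hYS, hYc, hYb⟩ := hY
  have heX : e ∈ X := (Finset.mem_sdiff.mp he).1
  have heY : e ∉ Y := (Finset.mem_sdiff.mp he).2
  have hrpos : 1 ≤ r := by
    have := Finset.card_pos.mpr ⟨e, heX⟩; omega
  have hcds : (X \ Y).card = (Y \ X).card :=
    Finset.card_sdiff_comm (hXc.trans hYc.symm)
  have hXYpos : 1 ≤ (X \ Y).card := Finset.card_pos.mpr ⟨e, he⟩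
  -- there is at most one "blocking" index: e ∉ H i and X ∩ H i is tight
  have huniq : ∀ i j, i ≠ j →
      ¬((e ∉ H i ∧ ri i ≤ (X ∩ H i).card) ∧ (e ∉ H j ∧ ri j ≤ (X ∩ H j).card)) := by
    rintro i j hij ⟨⟨hei, hti⟩, ⟨hej, htj⟩⟩
    set Z := X.erase e with hZdef
    have hZc : Z.card + 1 = r := by
      rw [hZdef, Finset.card_erase_of_mem heX]; omega
    have hZi : Z ∩ H i = X ∩ H i := by
      rw [hZdef, Finset.erase_inter, Finset.erase_eq_of_notMem]
      simp only [mem_inter]; tauto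
    have hZj : Z ∩ H j = X ∩ H j := by
      rw [hZdef, Finset.erase_inter, Finset.erase_eq_of_notMem]
      simp only [mem_inter]; tauto
    have hsm := elemSplit_submod Z (H i) (H j)
    rw [hZi, hZj] at hsm
    have hh1 := h1 i j hij
    have := hXb i
    have := hXb j
    omega
  -- choose a good f
  have hf : ∃ f ∈ Y \ X, ∀ i, f ∈ H i → (e ∈ H i ∨ (X ∩ H i).card < ri i) := by
    by_cases hbl : ∃ i0, e ∉ H i0 ∧ ri i0 ≤ (X ∩ H i0).card
    · obtain ⟨i0, hei0, hti0⟩ := hbl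
      -- find f ∈ (Y \ X) \ H i0
      obtain ⟨f, hfYX, hfH⟩ : ∃ f ∈ Y \ X, f ∉ H i0 := by
        by_contra hcon
        push_neg at hcon
        -- then Y ∩ H i0 is too big
        have hsplit : ((X ∩ H i0) \ Y).card + ((X ∩ H i0) ∩ Y).card = (X ∩ H i0).card :=
          Finset.card_sdiff_add_card_inter _ _
        have hsub1 : (X ∩ H i0) \ Y ⊆ (X \ Y).erase e := by
          intro t ht
          simp only [mem_sdiff, mem_inter, mem_erase] at ht ⊢
          exact ⟨fun h => hei0 (h ▸ ht.1.2), ht.1.1, ht.2⟩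
        have hc1 : ((X ∩ H i0) \ Y).card + 1 ≤ (X \ Y).card := by
          have := Finset.card_le_card hsub1
          rw [Finset.card_erase_of_mem he] at this
          omega
        have hdisj : Disjoint (Y \ X) ((X ∩ H i0) ∩ Y) := by
          rw [Finset.disjoint_left]
          intro t ht ht'
          simp only [mem_sdiff, mem_inter] at ht ht'
          exact ht.2 ht'.1.1
        have hsub2 : (Y \ X) ∪ ((X ∩ H i0) ∩ Y) ⊆ Y ∩ H i0 := by
          intro t ht
          simp only [mem_union, mem_sdiff, mem_inter] at ht ⊢
          rcases ht with ht | ht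
          · exact ⟨ht.1, hcon t (Finset.mem_sdiff.mpr ht)⟩
          · exact ⟨ht.2, ht.1.2⟩
        have := Finset.card_le_card hsub2
        rw [Finset.card_union_of_disjoint hdisj] at this
        have := hYb i0
        omega
      refine ⟨f, hfYX, ?_⟩
      intro i hfi
      by_contra hcon
      push_neg at hcon
      obtain ⟨hei, hti⟩ := hcon
      have hii0 : i ≠ i0 := fun h => hfH (h ▸ hfi)
      exact huniq i i0 hii0 ⟨⟨hei, hti⟩, ⟨hei0, hti0⟩⟩
    · push_neg at hbl
      obtain ⟨f, hfYX⟩ : (Y \ X).Nonempty := Finset.card_pos.mp (by omega)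
      refine ⟨f, hfYX, ?_⟩
      intro i _
      by_contra hcon
      push_neg at hcon
      exact absurd (hbl i hcon.1) (by omega)
  obtain ⟨f, hfYX, hfgood⟩ := hf
  have hfY : f ∈ Y := (Finset.mem_sdiff.mp hfYX).1
  have hfnX : f ∉ X := (Finset.mem_sdiff.mp hfYX).2
  have hfne : f ∉ X.erase e := fun h => hfnX (Finset.mem_of_mem_erase h)
  refine ⟨f, hfYX, ?_, ?_, ?_⟩
  · exact Finset.insert_subset (hYS hfY) ((Finset.erase_subset e X).trans hXS)
  · rw [Finset.card_insert_of_notMem hfne, Finset.card_erase_of_mem heX]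
    omega
  · intro i
    by_cases hfi : f ∈ H i
    · have hsub : insert f (X.erase e) ∩ H i ⊆ insert f ((X ∩ H i).erase e) := by
        intro t ht
        simp only [mem_inter, mem_insert, mem_erase] at ht ⊢
        tauto
      have hle := Finset.card_le_card hsub
      have hle2 : (insert f ((X ∩ H i).erase e)).card ≤ ((X ∩ H i).erase e).card + 1 :=
        Finset.card_insert_le _ _
      rcases hfgood i hfi with hei | hlt
      · have hmem : e ∈ X ∩ H i := Finset.mem_inter.mpr ⟨heX, hei⟩
        have hec := Finset.card_erase_of_mem hmem
        have hpos : 1 ≤ (X ∩ H i).card := Finset.card_pos.mpr ⟨e, hmem⟩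
        have hxb := hXb i
        omega
      · have hec : ((X ∩ H i).erase e).card ≤ (X ∩ H i).card :=
          Finset.card_le_card (Finset.erase_subset _ _)
        omega
    · have hsub : insert f (X.erase e) ∩ H i ⊆ X ∩ H i := by
        intro t ht
        simp only [mem_inter, mem_insert, mem_erase] at ht ⊢
        rcases ht with ⟨ht1 | ht1, ht2⟩
        · exact absurd (ht1 ▸ ht2) hfi
        · exact ⟨ht1.2, ht2⟩
      exact (Finset.card_le_card hsub).trans (hXb i)

/-- Elementary split matroids are well defined: given `S`, hyperedges
`H_1, …, H_q` and values `r, r_1, …, r_q` satisfying (H1) and (H2), the family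
`B = {X ⊆ S : |X| = r, |X ∩ H_i| ≤ r_i for all i}` is nonempty and satisfies the
basis exchange axiom, hence is the family of bases of a matroid on `S`. -/
theorem elementarySplit_is_matroid {α : Type*} [DecidableEq α]
    (S : Finset α) (q r : ℕ) (H : Fin q → Finset α) (ri : Fin q → ℕ)
    (hHS : ∀ i, H i ⊆ S) (hSr : r ≤ S.card)
    (h1 : ∀ i j, i ≠ j → (H i ∩ H j).card + r ≤ ri i + ri j)
    (h2 : ∀ i, r ≤ (S \ H i).card + ri i) :
    (∃ X : Finset α, X ⊆ S ∧ X.card = r ∧ ∀ i, (X ∩ H i).card ≤ ri i) ∧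
      (∀ X Y : Finset α,
        (X ⊆ S ∧ X.card = r ∧ ∀ i, (X ∩ H i).card ≤ ri i) →
        (Y ⊆ S ∧ Y.card = r ∧ ∀ i, (Y ∩ H i).card ≤ ri i) →
        ∀ e ∈ X \ Y, ∃ f ∈ Y \ X,
          insert f (X.erase e) ⊆ S ∧ (insert f (X.erase e)).card = r ∧
            ∀ i, (insert f (X.erase e) ∩ H i).card ≤ ri i) := by
  exact ⟨elemSplit_exists S q r H ri hSr h1 h2,
    fun X Y hX hY e he => elemSplit_exchange S q r H ri h1 X Y hX hY e he⟩
end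

section
/- Let M be a rank-r elementary split matroid with a non-redundant representation given by hyperedges H_1, ..., H_q and values r, r_1, ..., r_q. If F ⊆ S has |F| = r and |F ∩ H_i| = r_i for some i, then F is a basis of M. -/
/-- In a rank-`r` elementary split matroid with a non-redundant representation
(conditions (H1)–(H4)), any set `F ⊆ S` of size `r` that is `H_i`-tight for some
`i` is a basis, i.e. it satisfies all the constraints `|F ∩ H_j| ≤ r_j`. -/
theorem tight_set_is_basis {α : Type*} [DecidableEq α]
    (S : Finset α) (q r : ℕ) (H : Fin q → Finset α) (ri : Fin q → ℕ)
    (hHS : ∀ i, H i ⊆ S) (hSr : r ≤ S.card)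
    (h1 : ∀ i j, i ≠ j → (H i ∩ H j).card + r ≤ ri i + ri j)
    (h2 : ∀ i, r ≤ (S \ H i).card + ri i)
    (h3 : ∀ i, ri i + 1 ≤ r)
    (h4 : ∀ i, ri i + 1 ≤ (H i).card)
    (F : Finset α) (hFS : F ⊆ S) (hFcard : F.card = r)
    (i : Fin q) (htight : (F ∩ H i).card = ri i) :
    F ⊆ S ∧ F.card = r ∧ ∀ j, (F ∩ H j).card ≤ ri j := by
  refine ⟨hFS, hFcard, fun j => ?_⟩
  by_cases hij : j = i
  · subst hij; exact le_of_eq htight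
  have key := h1 i j (fun h => hij h.symm)
  have hA : (F ∩ H j).card = ((F ∩ H j) ∩ H i).card + ((F ∩ H j) \ H i).card :=
    (Finset.card_inter_add_card_sdiff _ _).symm
  have h1' : (F ∩ H j) ∩ H i ⊆ H i ∩ H j := by
    intro x hx
    simp only [Finset.mem_inter] at hx ⊢
    exact ⟨hx.2, hx.1.2⟩
  have h2' : (F ∩ H j) \ H i ⊆ F \ (F ∩ H i) := by
    intro x hx
    simp only [Finset.mem_sdiff, Finset.mem_inter] at hx ⊢
    exact ⟨hx.1.1, fun h => hx.2 h.2⟩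
  have c1 : ((F ∩ H j) ∩ H i).card ≤ (H i ∩ H j).card := Finset.card_le_card h1'
  have c2 : ((F ∩ H j) \ H i).card ≤ F.card - (F ∩ H i).card := by
    calc ((F ∩ H j) \ H i).card ≤ (F \ (F ∩ H i)).card := Finset.card_le_card h2'
    _ = F.card - (F ∩ H i).card := Finset.card_sdiff_of_subset (Finset.inter_subset_left)
  have hri : ri i ≤ r := le_of_lt (h3 i)
  rw [hFcard, htight] at c2
  omega
end

section
/- Let M be a rank-r elementary split matroid with a non-redundant representation H_1, ..., H_q and values r, r_1, ..., r_q. If F ⊆ S has |F| = r and F is both H_i-tight and H_j-tight for distinct indices i and j, then H_i ∩ H_j ⊆ F ⊆ H_i ∪ H_j. -/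
/-- In a rank-`r` elementary split matroid with a non-redundant representation,
if a set `F` of size `r` is both `H_i`-tight and `H_j`-tight for distinct `i, j`,
then `H_i ∩ H_j ⊆ F ⊆ H_i ∪ H_j`. -/
theorem doubly_tight_sandwich {α : Type*} [DecidableEq α]
    (S : Finset α) (q r : ℕ) (H : Fin q → Finset α) (ri : Fin q → ℕ)
    (hHS : ∀ i, H i ⊆ S) (hSr : r ≤ S.card)
    (h1 : ∀ i j, i ≠ j → (H i ∩ H j).card + r ≤ ri i + ri j)
    (h2 : ∀ i, r ≤ (S \ H i).card + ri i)
    (h3 : ∀ i, ri i + 1 ≤ r)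
    (h4 : ∀ i, ri i + 1 ≤ (H i).card)
    (F : Finset α) (hFS : F ⊆ S) (hFcard : F.card = r)
    (i j : Fin q) (hij : i ≠ j)
    (hti : (F ∩ H i).card = ri i) (htj : (F ∩ H j).card = ri j) :
    H i ∩ H j ⊆ F ∧ F ⊆ H i ∪ H j := by
  have key : ((F ∩ H i) ∩ (F ∩ H j)).card + ((F ∩ H i) ∪ (F ∩ H j)).card = ri i + ri j := by
    rw [Finset.card_inter_add_card_union, hti, htj]
  have e1 : (F ∩ H i) ∩ (F ∩ H j) = F ∩ (H i ∩ H j) := by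
    ext x; simp [Finset.mem_inter]; tauto
  have e2 : (F ∩ H i) ∪ (F ∩ H j) = F ∩ (H i ∪ H j) := by
    ext x; simp [Finset.mem_inter, Finset.mem_union]; tauto
  rw [e1, e2] at key
  have b1 : (F ∩ (H i ∩ H j)).card ≤ (H i ∩ H j).card :=
    Finset.card_le_card (Finset.inter_subset_right)
  have b2 : (F ∩ (H i ∪ H j)).card ≤ F.card :=
    Finset.card_le_card (Finset.inter_subset_left)
  have hb := h1 i j hij
  have eq1 : (F ∩ (H i ∩ H j)).card = (H i ∩ H j).card := by omega
  have eq2 : (F ∩ (H i ∪ H j)).card = F.card := by omega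
  constructor
  · have := Finset.eq_of_subset_of_card_le (Finset.inter_subset_right (s₁ := F))
      (le_of_eq eq1.symm)
    intro x hx
    have : x ∈ F ∩ (H i ∩ H j) := by rw [this]; exact hx
    exact (Finset.mem_inter.mp this).1
  · have := Finset.eq_of_subset_of_card_le (Finset.inter_subset_left (s₂ := H i ∪ H j))
      (le_of_eq eq2.symm)
    intro x hx
    have : x ∈ F ∩ (H i ∪ H j) := by rw [this]; exact hx
    exact (Finset.mem_inter.mp this).2
end

section
/- Every strongly base orderable matroid whose ground set is partitioned into two disjoint bases B_1 and B_2 admits a cyclic ordering in which the elements of B_1 and B_2 form intervals. -/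
theorem window_eq {α} (A B : List α) (r k : ℕ) (hA : A.length = r) (hB : B.length = r) (hk : k ≤ r) :
    ((A ++ B).rotate k).take r = A.drop k ++ B.take k := by
  rw [List.rotate_eq_drop_append_take (by simp [hA, hB]; omega),
    List.drop_append, List.take_append]
  simp only [hA, Nat.sub_eq_zero_of_le hk, List.drop_zero, List.take_zero, List.append_nil]
  rw [List.take_append]
  have h1 : (A.drop k).length = r - k := by simp [hA]
  rw [List.take_of_length_le (by omega), h1, Nat.sub_sub_self hk,
    List.take_append]
  simp [hB, Nat.sub_eq_zero_of_le hk]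

theorem drop_set_eq {α} [DecidableEq α] (L : List α) (h : L.Nodup) (k : ℕ) :
    (↑(L.drop k).toFinset : Set α) = ↑L.toFinset \ ↑(L.take k).toFinset := by
  have hsplit := List.take_append_drop k L
  have hnd : (L.take k ++ L.drop k).Nodup := by rw [hsplit]; exact h
  rw [List.nodup_append] at hnd
  ext x
  simp only [Set.mem_diff, List.coe_toFinset, Set.mem_setOf_eq]
  constructor
  · intro hx
    refine ⟨?_, fun hx' => hnd.2.2 x hx' x hx rfl⟩
    rw [← hsplit]; exact List.mem_append_right _ hx
  · rintro ⟨hx, hx'⟩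
    rw [← hsplit] at hx
    rcases List.mem_append.1 hx with h' | h'
    · exact absurd h' hx'
    · exact h'

/-- Every strongly base orderable matroid whose ground set is partitioned into
two disjoint bases `B₁` and `B₂` admits a cyclic ordering in which the elements
of `B₁` and of `B₂` form intervals. -/
theorem stronglyBaseOrderable_cyclic_ordering {α : Type*} [DecidableEq α]
    (M : Matroid α) (hfin : M.E.Finite) (r : ℕ)
    (hSBO : ∀ A B : Set α, M.IsBase A → M.IsBase B → ∃ φ : α → α,
      Set.BijOn φ A B ∧ ∀ X ⊆ A, M.IsBase ((A \ X) ∪ φ '' X))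
    (B1 B2 : Set α) (hB1 : M.IsBase B1) (hB2 : M.IsBase B2)
    (hdisj : Disjoint B1 B2) (hU : B1 ∪ B2 = M.E)
    (hr : ∀ B, M.IsBase B → B.ncard = r) :
    ∃ l : List α, l.Nodup ∧ (↑l.toFinset : Set α) = M.E ∧
      (∀ m : ℕ, M.IsBase (↑((l.rotate m).take r).toFinset : Set α)) ∧
      (∃ m : ℕ, (↑((l.rotate m).take r).toFinset : Set α) = B1) ∧
      (∃ m : ℕ, (↑((l.rotate m).take r).toFinset : Set α) = B2) := by
  have hfin1 : B1.Finite := hfin.subset (hU ▸ Set.subset_union_left)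
  have hfin2 : B2.Finite := hfin.subset (hU ▸ Set.subset_union_right)
  by_cases hr0 : r = 0
  · subst hr0
    have h1 : B1 = ∅ := (Set.ncard_eq_zero hfin1).1 (hr B1 hB1)
    have h2 : B2 = ∅ := (Set.ncard_eq_zero hfin2).1 (hr B2 hB2)
    refine ⟨[], by simp, by simp [← hU, h1, h2], ?_, ⟨0, by simp [h1]⟩, ⟨0, by simp [h2]⟩⟩
    intro m
    simpa [h1] using hB1
  -- main case
  obtain ⟨φ, hφbij, hφbase⟩ := hSBO B1 B2 hB1 hB2
  set L1 : List α := hfin1.toFinset.toList with hL1def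
  have hL1nd : L1.Nodup := Finset.nodup_toList _
  have hL1set : (↑L1.toFinset : Set α) = B1 := by
    rw [hL1def, Finset.toList_toFinset]; exact hfin1.coe_toFinset
  have hL1len : L1.length = r := by
    rw [hL1def, Finset.length_toList, ← Set.ncard_eq_toFinset_card B1 hfin1, hr B1 hB1]
  have hmem1 : ∀ x ∈ L1, x ∈ B1 := by
    intro x hx; rw [← hL1set]; simpa using hx
  set L2 : List α := L1.map φ with hL2def
  have hL2nd : L2.Nodup := by
    refine List.Nodup.map_on ?_ hL1nd
    intro x hx y hy hxy
    exact hφbij.injOn (hmem1 x hx) (hmem1 y hy) hxy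
  have hmapset : ∀ L : List α, (↑(L.map φ).toFinset : Set α) = φ '' ↑L.toFinset := by
    intro L; ext x; simp
  have hL2set : (↑L2.toFinset : Set α) = B2 := by
    rw [hL2def, hmapset, hL1set, hφbij.image_eq]
  have hL2len : L2.length = r := by simp [hL2def, hL1len]
  have hmem2 : ∀ x ∈ L2, x ∈ B2 := by
    intro x hx; rw [← hL2set]; simpa using hx
  set l : List α := L1 ++ L2 with hldef
  have hlnd : l.Nodup := by
    rw [hldef, List.nodup_append]
    exact ⟨hL1nd, hL2nd, fun a ha b hb hab =>
      Set.disjoint_left.1 hdisj (hmem1 a ha) (by rw [hab]; exact hmem2 b hb)⟩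
  have hlset : (↑l.toFinset : Set α) = M.E := by
    rw [hldef, List.toFinset_append, Finset.coe_union, hL1set, hL2set, hU]
  have hllen : l.length = r + r := by simp [hldef, hL1len, hL2len]
  have hrotr : l.rotate r = L2 ++ L1 := by
    rw [List.rotate_eq_drop_append_take (by omega), hldef,
      List.drop_left' hL1len, List.take_left' hL1len]
  -- take-set as subset of B1
  have htakesub : ∀ k : ℕ, (↑(L1.take k).toFinset : Set α) ⊆ B1 := by
    intro k x hx
    apply hmem1
    have : x ∈ L1.take k := by simpa using hx
    exact List.mem_of_mem_take this
  have key : ∀ m : ℕ, ∃ X ⊆ B1,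
      (↑((l.rotate m).take r).toFinset : Set α) = (B1 \ X) ∪ φ '' X := by
    intro m
    rw [← List.rotate_mod]
    set k := m % l.length with hkdef
    have hklt : k < r + r := hllen ▸ Nat.mod_lt _ (by omega)
    by_cases hkr : k ≤ r
    · refine ⟨↑(L1.take k).toFinset, htakesub k, ?_⟩
      rw [hldef, window_eq L1 L2 r k hL1len hL2len hkr]
      rw [List.toFinset_append, Finset.coe_union, drop_set_eq L1 hL1nd k, hL1set]
      congr 1
      rw [hL2def, ← List.map_take, hmapset]
    · set j := k - r with hjdef
      have hjr : j ≤ r := by omega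
      have hkrj : k = r + j := by omega
      set Y : Set α := ↑(L1.take j).toFinset with hYdef
      have hYsub : Y ⊆ B1 := htakesub j
      refine ⟨B1 \ Y, Set.diff_subset, ?_⟩
      rw [hkrj, ← List.rotate_rotate, hrotr, window_eq L2 L1 r j hL2len hL1len hjr]
      rw [List.toFinset_append, Finset.coe_union, drop_set_eq L2 hL2nd j, hL2set]
      have h1 : (↑(L2.take j).toFinset : Set α) = φ '' Y := by
        rw [hL2def, ← List.map_take, hmapset, hYdef]
      have h2 : B1 \ (B1 \ Y) = Y := Set.diff_diff_cancel_left hYsub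
      have h3 : φ '' (B1 \ Y) = B2 \ φ '' Y := by
        rw [← hφbij.image_eq]
        rw [Set.InjOn.image_diff hφbij.injOn, Set.inter_eq_right.2 hYsub]
      rw [h1, h2, h3, Set.union_comm]
  refine ⟨l, hlnd, hlset, ?_, ⟨0, ?_⟩, ⟨r, ?_⟩⟩
  · intro m
    obtain ⟨X, hX, heq⟩ := key m
    rw [heq]
    exact hφbase X hX
  · rw [List.rotate_zero, hldef, List.take_left' hL1len]
    exact hL1set
  · rw [hrotr, List.take_left' hL2len]
    exact hL2set
end

section
/- Every sparse paving matroid whose ground set is partitioned into k pairwise disjoint bases admits a cyclic ordering in which each basis of the partition forms an interval. -/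
set_option linter.unusedSectionVars false

namespace SPV

variable {α : Type*} [DecidableEq α]

/-- cyclic get on a list of blocks -/
def bget (bs : List (List α)) (j : ℕ) : List α := bs.getD (j % bs.length) []

lemma bget_eq_get (bs : List (List α)) (hbs : bs ≠ []) (j : ℕ) :
    bget bs j = bs.get ⟨j % bs.length, Nat.mod_lt _ (List.length_pos_iff.mpr hbs)⟩ := by
  unfold bget
  rw [List.getD_eq_getElem _ _ (Nat.mod_lt _ (List.length_pos_iff.mpr hbs))]
  simp [List.get_eq_getElem]

lemma bget_mod (bs : List (List α)) (j : ℕ) : bget bs (j % bs.length) = bget bs j := by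
  unfold bget
  rw [Nat.mod_mod_of_dvd j (dvd_refl bs.length)]

lemma bget_rotate (bs : List (List α)) (hbs : bs ≠ []) (n j : ℕ) :
    bget (bs.rotate n) j = bget bs (j + n) := by
  have hne : bs.rotate n ≠ [] := by
    intro h
    exact hbs (by simpa using congrArg List.length h)
  rw [bget_eq_get _ hne, bget_eq_get _ hbs]
  have hlen : (bs.rotate n).length = bs.length := List.length_rotate _ _
  rw [List.get_rotate]
  simp only [hlen, Nat.mod_add_mod]

lemma bget_flatten_len {r : ℕ} (bs : List (List α)) (hlen : ∀ b ∈ bs, b.length = r) :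
    bs.flatten.length = bs.length * r := by
  induction bs with
  | nil => simp
  | cons a l ih =>
    simp only [List.flatten_cons, List.length_append, List.length_cons]
    rw [ih (fun b hb => hlen b (by simp [hb])), hlen a (by simp)]
    ring

lemma flatten_rotate_one {r : ℕ} (bs : List (List α)) (hlen : ∀ b ∈ bs, b.length = r) :
    bs.flatten.rotate r = (bs.rotate 1).flatten := by
  cases bs with
  | nil => simp
  | cons a l =>
    have ha : a.length = r := hlen a (by simp)
    have h1 : (a :: l).rotate 1 = l ++ [a] := by
      rw [List.rotate_cons_succ, List.rotate_zero]
    rw [h1]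
    simp only [List.flatten_cons, List.flatten_append, List.flatten_cons, List.flatten_nil,
      List.append_nil]
    rw [← ha, List.rotate_append_length_eq]

lemma flatten_rotate_mul {r : ℕ} (bs : List (List α)) (hlen : ∀ b ∈ bs, b.length = r) (n : ℕ) :
    bs.flatten.rotate (n * r) = (bs.rotate n).flatten := by
  induction n with
  | zero => simp
  | succ n ih =>
    have : (n + 1) * r = n * r + r := by ring
    rw [this, ← List.rotate_rotate, ih, flatten_rotate_one _
      (fun b hb => hlen b ((List.mem_rotate).mp hb)), List.rotate_rotate]

lemma window_zero {r : ℕ} (bs : List (List α)) (hbs : bs ≠ [])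
    (hlen : ∀ b ∈ bs, b.length = r) (t : ℕ) (ht : t ≤ r) :
    (bs.flatten.rotate t).take r = (bget bs 0).drop t ++ (bget bs 1).take t := by
  obtain ⟨a, rest, rfl⟩ := List.exists_cons_of_ne_nil hbs
  have ha : a.length = r := hlen a (by simp)
  have hbg0 : bget (a :: rest) 0 = a := by unfold bget; simp
  rw [hbg0]
  cases rest with
  | nil =>
    have hbg1 : bget [a] 1 = a := by unfold bget; simp
    rw [hbg1]
    have hfl : ([a] : List (List α)).flatten = a := by simp
    rw [hfl]
    rw [List.rotate_eq_drop_append_take (by omega : t ≤ a.length)]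
    rw [List.take_append]
    have h1 : (a.drop t).length = r - t := by rw [List.length_drop, ha]
    rw [List.take_of_length_le (by omega : (a.drop t).length ≤ r)]
    congr 1
    rw [h1]
    have : r - (r - t) = t := by omega
    rw [this]
    rw [List.take_take]
    congr 1
    omega
  | cons b rest' =>
    have hb : b.length = r := hlen b (by simp)
    have hbg1 : bget (a :: b :: rest') 1 = b := by
      unfold bget
      have h11 : (1 : ℕ) % (a :: b :: rest').length = 1 := by
        simp only [List.length_cons]
        exact Nat.mod_eq_of_lt (by omega)
      rw [h11]
      rfl
    rw [hbg1]
    have hfl : (a :: b :: rest').flatten = a ++ (b ++ rest'.flatten) := by simp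
    rw [hfl]
    set J := b ++ rest'.flatten with hJ
    have hJlen : r ≤ J.length := by
      rw [hJ]; simp only [List.length_append]; omega
    have htle : t ≤ (a ++ J).length := by
      simp only [List.length_append]; omega
    rw [List.rotate_eq_drop_append_take htle]
    rw [List.drop_append, List.take_append]
    have h0 : t - a.length = 0 := by omega
    rw [h0]
    simp only [List.drop_zero, List.take_zero, List.append_nil]
    rw [List.take_append]
    have h2 : (a.drop t ++ J).length = (r - t) + J.length := by
      simp only [List.length_append, List.length_drop, ha]
    have h3 : r - (a.drop t ++ J).length = 0 := by rw [h2]; omega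
    rw [h3]
    simp only [List.take_zero, List.append_nil]
    rw [List.take_append]
    have h4 : (a.drop t).length = r - t := by rw [List.length_drop, ha]
    rw [List.take_of_length_le (by omega : (a.drop t).length ≤ r)]
    congr 1
    rw [h4]
    have : r - (r - t) = t := by omega
    rw [this]
    have h5 : t - b.length = 0 := by rw [hb]; omega
    rw [h5]
    simp

/-- every cyclic window of the flattened list is a boundary segment -/
lemma window_char {r : ℕ} (hr : 0 < r) (bs : List (List α)) (hbs : bs ≠ [])
    (hlen : ∀ b ∈ bs, b.length = r) (m : ℕ) :
    ∃ j t, t < r ∧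
      (bs.flatten.rotate m).take r = (bget bs j).drop t ++ (bget bs (j + 1)).take t := by
  have hL : bs.flatten.length = bs.length * r := bget_flatten_len bs hlen
  have hk : 0 < bs.length := List.length_pos_iff.mpr hbs
  have hLpos : 0 < bs.flatten.length := by rw [hL]; positivity
  set m' := m % bs.flatten.length with hm'
  have hm'lt : m' < bs.length * r := by rw [← hL]; exact Nat.mod_lt _ hLpos
  refine ⟨m' / r, m' % r, Nat.mod_lt _ hr, ?_⟩
  have hrot : bs.flatten.rotate m = bs.flatten.rotate m' := (List.rotate_mod _ _).symm
  rw [hrot]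
  have hdecomp : m' = (m' / r) * r + m' % r := by
    have h := Nat.div_add_mod m' r
    rw [Nat.mul_comm] at h
    omega
  conv_lhs => rw [hdecomp]
  rw [← List.rotate_rotate, flatten_rotate_mul bs hlen]
  have hne : bs.rotate (m' / r) ≠ [] := by
    intro h
    exact hbs (by simpa using congrArg List.length h)
  rw [window_zero (bs.rotate (m' / r)) hne
    (fun b hb => hlen b ((List.mem_rotate).mp hb)) _ (le_of_lt (Nat.mod_lt _ hr))]
  rw [bget_rotate bs hbs, bget_rotate bs hbs]
  rw [Nat.zero_add, Nat.add_comm 1 (m' / r)]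


section Core

/-- a window list is OK if it is not a hyperedge -/
def Ok {q : ℕ} (HF : Fin q → Finset α) (w : List α) : Prop := ∀ i, w.toFinset ≠ HF i

def PairGood (r : ℕ) {q : ℕ} (HF : Fin q → Finset α) (a b : List α) : Prop :=
  ∀ t, 0 < t → t < r → Ok HF (a.drop t ++ b.take t)

/-- forbidden prefix coming from the left boundary -/
def Fmem {q : ℕ} (HF : Fin q → Finset α) (la : List α) (A : Finset α) : Prop :=
  ∃ i, (la.drop A.card).toFinset ∪ A = HF i

/-- forbidden prefix coming from the right boundary -/
def Gmem {q : ℕ} (HF : Fin q → Finset α) (X : Finset α) (lb : List α) (A : Finset α) : Prop :=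
  ∃ i, (X \ A) ∪ (lb.take A.card).toFinset = HF i

def BadP {q : ℕ} (HF : Fin q → Finset α) (X : Finset α) (la lb : List α) (A : Finset α) : Prop :=
  Fmem HF la A ∨ Gmem HF X lb A

def Alive (r : ℕ) {q : ℕ} (HF : Fin q → Finset α) (X : Finset α) (la lb : List α)
    (A : Finset α) : Prop :=
  (A.card < r → ¬ BadP HF X la lb A) ∧
    (2 ≤ A.card → ∃ x, ∃ _ : x ∈ A, Alive r HF X la lb (A.erase x))
termination_by A.card
decreasing_by exact Finset.card_erase_lt_of_mem ‹_›

def StuckP {q : ℕ} (HF : Fin q → Finset α) (X : Finset α) (la lb : List α) : Prop :=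
  ∃ x y z : α, x ≠ y ∧ x ≠ z ∧ y ≠ z ∧ X = {x, y, z} ∧
    Fmem HF la {x} ∧ Gmem HF X lb {y} ∧ Fmem HF la ({y, z} : Finset α) ∧
    Gmem HF X lb ({x, z} : Finset α)

end Core

section ListFinset

lemma take_toFinset_card {l : List α} (hl : l.Nodup) {t : ℕ} (ht : t ≤ l.length) :
    (l.take t).toFinset.card = t := by
  rw [List.toFinset_card_of_nodup (hl.sublist (List.take_sublist _ _)),
    List.length_take]
  omega

lemma drop_toFinset_card {l : List α} (hl : l.Nodup) (t : ℕ) :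
    (l.drop t).toFinset.card = l.length - t := by
  rw [List.toFinset_card_of_nodup (hl.sublist (List.drop_sublist _ _)),
    List.length_drop]

lemma take_union_drop_toFinset (l : List α) (t : ℕ) :
    (l.take t).toFinset ∪ (l.drop t).toFinset = l.toFinset := by
  rw [← List.toFinset_append, List.take_append_drop]

lemma take_drop_disjoint {l : List α} (hl : l.Nodup) (t : ℕ) :
    Disjoint (l.take t).toFinset (l.drop t).toFinset := by
  rw [List.disjoint_toFinset_iff_disjoint]
  have h := hl
  rw [← List.take_append_drop t l] at h
  exact (List.nodup_append'.mp h).2.2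

lemma drop_toFinset_eq_sdiff {l : List α} (hl : l.Nodup) (t : ℕ) :
    (l.drop t).toFinset = l.toFinset \ (l.take t).toFinset := by
  rw [← take_union_drop_toFinset l t, Finset.union_sdiff_cancel_left (take_drop_disjoint hl t)]

lemma drop_toFinset_subset (l : List α) (t : ℕ) : (l.drop t).toFinset ⊆ l.toFinset := by
  intro x hx
  simp only [List.mem_toFinset] at *
  exact List.drop_subset _ _ hx

lemma take_toFinset_subset (l : List α) (t : ℕ) : (l.take t).toFinset ⊆ l.toFinset := by
  intro x hx
  simp only [List.mem_toFinset] at *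
  exact List.take_subset _ _ hx

lemma drop_toFinset_mono (l : List α) {t t' : ℕ} (h : t ≤ t') :
    (l.drop t').toFinset ⊆ (l.drop t).toFinset := by
  intro x hx
  simp only [List.mem_toFinset] at *
  have : l.drop t' = (l.drop t).drop (t' - t) := by
    rw [List.drop_drop]
    congr 1
    omega
  rw [this] at hx
  exact List.drop_subset _ _ hx

lemma take_toFinset_mono (l : List α) {t t' : ℕ} (h : t ≤ t') :
    (l.take t).toFinset ⊆ (l.take t').toFinset := by
  intro x hx
  simp only [List.mem_toFinset] at *
  have : l.take t = (l.take t').take t := by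
    rw [List.take_take, Nat.min_eq_left h]
  rw [this] at hx
  exact List.take_subset _ _ hx

end ListFinset

section Lemmas

variable {r q : ℕ} {HF : Fin q → Finset α}
variable (hdist : ∀ i j : Fin q, i ≠ j → (HF i ∩ HF j).card + 2 ≤ r)

include hdist

lemma lemF {la : List α} {X : Finset α} (hdisj : Disjoint la.toFinset X)
    (hla : la.Nodup) (hlen : la.length = r)
    {A A' : Finset α} (hA : A ⊆ X) (hA' : A' ⊆ X) (hF : Fmem HF la A) (hF' : Fmem HF la A')
    (hne : A ≠ A') (hle : A.card ≤ A'.card) (hle' : A'.card ≤ r) :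
    (A ∩ A').card + 2 ≤ A'.card := by
  obtain ⟨i, hi⟩ := hF
  obtain ⟨i', hi'⟩ := hF'
  have hSdisj : ∀ t, Disjoint (la.drop t).toFinset X :=
    fun t => Finset.disjoint_of_subset_left (drop_toFinset_subset la t) hdisj
  have hii : i ≠ i' := by
    rintro rfl
    apply hne
    have h := hi.trans hi'.symm
    have e1 : ((la.drop A.card).toFinset ∪ A) ∩ X = A := by
      rw [Finset.union_inter_distrib_right, Finset.disjoint_iff_inter_eq_empty.mp (hSdisj _),
        Finset.empty_union, Finset.inter_eq_left.mpr hA]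
    have e2 : ((la.drop A'.card).toFinset ∪ A') ∩ X = A' := by
      rw [Finset.union_inter_distrib_right, Finset.disjoint_iff_inter_eq_empty.mp (hSdisj _),
        Finset.empty_union, Finset.inter_eq_left.mpr hA']
    rw [← e1, ← e2, h]
  have hsub : (la.drop A'.card).toFinset ∪ (A ∩ A') ⊆ HF i ∩ HF i' := by
    apply Finset.union_subset
    · apply Finset.subset_inter
      · exact (drop_toFinset_mono la hle).trans (Finset.union_subset_iff.mp hi.le).1
      · exact (Finset.union_subset_iff.mp hi'.le).1
    · apply Finset.subset_inter
      · exact (Finset.inter_subset_left).trans (Finset.union_subset_iff.mp hi.le).2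
      · exact (Finset.inter_subset_right).trans (Finset.union_subset_iff.mp hi'.le).2
  have hcard : ((la.drop A'.card).toFinset ∪ (A ∩ A')).card = (r - A'.card) + (A ∩ A').card := by
    rw [Finset.card_union_of_disjoint, drop_toFinset_card hla, hlen]
    exact Finset.disjoint_of_subset_right (Finset.inter_subset_left.trans hA) (hSdisj _)
  have h1 := Finset.card_le_card hsub
  have h2 := hdist i i' hii
  omega

lemma lemG {lb : List α} {X : Finset α} (hdisj : Disjoint lb.toFinset X)
    (hlb : lb.Nodup) (hlen : lb.length = r) (hX : X.card = r)
    {A A' : Finset α} (hA : A ⊆ X) (hA' : A' ⊆ X) (hG : Gmem HF X lb A) (hG' : Gmem HF X lb A')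
    (hne : A ≠ A') (hle : A.card ≤ A'.card) (hle' : A'.card ≤ r) :
    (A ∩ A').card + 2 ≤ A'.card := by
  obtain ⟨i, hi⟩ := hG
  obtain ⟨i', hi'⟩ := hG'
  have hPdisj : ∀ t, Disjoint (lb.take t).toFinset X :=
    fun t => Finset.disjoint_of_subset_left (take_toFinset_subset lb t) hdisj
  have hii : i ≠ i' := by
    rintro rfl
    apply hne
    have h := hi.trans hi'.symm
    have e1 : ((X \ A) ∪ (lb.take A.card).toFinset) ∩ X = X \ A := by
      rw [Finset.union_inter_distrib_right,
        Finset.disjoint_iff_inter_eq_empty.mp (hPdisj _), Finset.union_empty,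
        Finset.inter_eq_left.mpr (Finset.sdiff_subset)]
    have e2 : ((X \ A') ∪ (lb.take A'.card).toFinset) ∩ X = X \ A' := by
      rw [Finset.union_inter_distrib_right,
        Finset.disjoint_iff_inter_eq_empty.mp (hPdisj _), Finset.union_empty,
        Finset.inter_eq_left.mpr (Finset.sdiff_subset)]
    have e3 : X \ A = X \ A' := by rw [← e1, ← e2, h]
    calc A = X \ (X \ A) := (Finset.sdiff_sdiff_eq_self hA).symm
    _ = X \ (X \ A') := by rw [e3]
    _ = A' := Finset.sdiff_sdiff_eq_self hA'
  have hsub : (X \ (A ∪ A')) ∪ (lb.take A.card).toFinset ⊆ HF i ∩ HF i' := by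
    apply Finset.union_subset
    · apply Finset.subset_inter
      · exact (Finset.sdiff_subset_sdiff (le_refl X) Finset.subset_union_left).trans
          (Finset.union_subset_iff.mp hi.le).1
      · exact (Finset.sdiff_subset_sdiff (le_refl X) Finset.subset_union_right).trans
          (Finset.union_subset_iff.mp hi'.le).1
    · apply Finset.subset_inter
      · exact (Finset.union_subset_iff.mp hi.le).2
      · exact ((take_toFinset_mono lb hle).trans (Finset.union_subset_iff.mp hi'.le).2)
  have hcard : ((X \ (A ∪ A')) ∪ (lb.take A.card).toFinset).card
      = (r - (A ∪ A').card) + A.card := by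
    rw [Finset.card_union_of_disjoint, Finset.card_sdiff_of_subset (Finset.union_subset hA hA'), hX,
      take_toFinset_card hlb (by omega : A.card ≤ lb.length)]
    exact Finset.disjoint_of_subset_left Finset.sdiff_subset (hPdisj _).symm
  have h1 := Finset.card_le_card hsub
  have h2 := hdist i i' hii
  have h3 : (A ∪ A').card + (A ∩ A').card = A.card + A'.card :=
    Finset.card_union_add_card_inter A A'
  have h4 : (A ∪ A').card ≤ r := by
    rw [← hX]; exact Finset.card_le_card (Finset.union_subset hA hA')
  omega

end Lemmas


section AliveAnalysis

open Classical in
/-- three-class pigeonhole -/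
lemma pigeon3 {S : Finset α} (C1 C2 C3 : α → Prop)
    (h : ∀ x ∈ S, C1 x ∨ C2 x ∨ C3 x)
    (h1 : ∀ x ∈ S, ∀ y ∈ S, x ≠ y → C1 x → C1 y → False)
    (h2 : ∀ x ∈ S, ∀ y ∈ S, x ≠ y → C2 x → C2 y → False)
    (h3 : ∀ x ∈ S, ∀ y ∈ S, x ≠ y → C3 x → C3 y → False) :
    S.card ≤ 3 := by
  classical
  have hsub : S ⊆ S.filter C1 ∪ S.filter C2 ∪ S.filter C3 := by
    intro x hx
    rcases h x hx with hc | hc | hc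
    · exact Finset.mem_union_left _ (Finset.mem_union_left _ (Finset.mem_filter.mpr ⟨hx, hc⟩))
    · exact Finset.mem_union_left _ (Finset.mem_union_right _ (Finset.mem_filter.mpr ⟨hx, hc⟩))
    · exact Finset.mem_union_right _ (Finset.mem_filter.mpr ⟨hx, hc⟩)
  have c1 : (S.filter C1).card ≤ 1 := by
    rw [Finset.card_le_one]
    intro a ha b hb
    rw [Finset.mem_filter] at ha hb
    by_contra hne
    exact h1 a ha.1 b hb.1 hne ha.2 hb.2
  have c2 : (S.filter C2).card ≤ 1 := by
    rw [Finset.card_le_one]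
    intro a ha b hb
    rw [Finset.mem_filter] at ha hb
    by_contra hne
    exact h2 a ha.1 b hb.1 hne ha.2 hb.2
  have c3 : (S.filter C3).card ≤ 1 := by
    rw [Finset.card_le_one]
    intro a ha b hb
    rw [Finset.mem_filter] at ha hb
    by_contra hne
    exact h3 a ha.1 b hb.1 hne ha.2 hb.2
  calc S.card ≤ (S.filter C1 ∪ S.filter C2 ∪ S.filter C3).card := Finset.card_le_card hsub
  _ ≤ (S.filter C1 ∪ S.filter C2).card + (S.filter C3).card := Finset.card_union_le _ _
  _ ≤ ((S.filter C1).card + (S.filter C2).card) + (S.filter C3).card := by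
      have := Finset.card_union_le (S.filter C1) (S.filter C2)
      omega
  _ ≤ 3 := by omega

variable {r q : ℕ} {HF : Fin q → Finset α} {X : Finset α} {la lb : List α}

lemma alive_iff (A : Finset α) :
    Alive r HF X la lb A ↔ ((A.card < r → ¬ BadP HF X la lb A) ∧
      (2 ≤ A.card → ∃ x, ∃ _ : x ∈ A, Alive r HF X la lb (A.erase x))) := by
  rw [Alive]

lemma notalive_cases {A : Finset α} (h : ¬ Alive r HF X la lb A) :
    (A.card < r ∧ BadP HF X la lb A) ∨
      (2 ≤ A.card ∧ ∀ x ∈ A, ¬ Alive r HF X la lb (A.erase x)) := by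
  rw [alive_iff] at h
  rcases not_and_or.mp h with h | h
  · obtain ⟨h1, h2⟩ := _root_.not_imp.mp h
    exact Or.inl ⟨h1, not_not.mp h2⟩
  · obtain ⟨h1, h2⟩ := _root_.not_imp.mp h
    refine Or.inr ⟨h1, fun x hx => ?_⟩
    push_neg at h2
    exact h2 x hx

lemma notalive_singleton {A : Finset α} (hA : A.card = 1) (h : ¬ Alive r HF X la lb A) :
    1 < r ∧ BadP HF X la lb A := by
  rcases notalive_cases h with ⟨h1, h2⟩ | ⟨h1, _⟩
  · exact ⟨by omega, h2⟩
  · omega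

section WithHyps

variable (hdist : ∀ i j : Fin q, i ≠ j → (HF i ∩ HF j).card + 2 ≤ r)
variable (hX : X.card = r)
variable (hlaX : Disjoint la.toFinset X) (hlbX : Disjoint lb.toFinset X)
variable (hla : la.Nodup) (hlb : lb.Nodup) (hlal : la.length = r) (hlbl : lb.length = r)

include hdist hlaX hla hlal hX in
lemma F1u {x y : α} (hx : x ∈ X) (hy : y ∈ X)
    (hFx : Fmem HF la {x}) (hFy : Fmem HF la {y}) : x = y := by
  by_contra hne
  have hr1 : 1 ≤ r := by
    rw [← hX]
    exact Finset.card_pos.mpr ⟨y, hy⟩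
  have h := lemF hdist hlaX hla hlal (Finset.singleton_subset_iff.mpr hx)
    (Finset.singleton_subset_iff.mpr hy) hFx hFy
    (by simp [hne]) (by simp) (by rw [Finset.card_singleton]; omega)
  simp only [Finset.card_singleton] at h
  omega

include hdist hlbX hlb hlbl hX in
lemma G1u {x y : α} (hx : x ∈ X) (hy : y ∈ X)
    (hGx : Gmem HF X lb {x}) (hGy : Gmem HF X lb {y}) : x = y := by
  by_contra hne
  have hr1 : 1 ≤ r := by
    rw [← hX]
    exact Finset.card_pos.mpr ⟨y, hy⟩
  have h := lemG hdist hlbX hlb hlbl hX (Finset.singleton_subset_iff.mpr hx)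
    (Finset.singleton_subset_iff.mpr hy) hGx hGy
    (by simp [hne]) (by simp) (by rw [Finset.card_singleton]; omega)
  simp only [Finset.card_singleton] at h
  omega

include hdist hlaX hla hlal hX in
lemma Fpair_unique {S A A' : Finset α} (hSX : S ⊆ X)
    (hA : A ⊆ S) (hA' : A' ⊆ S) (hcard : A.card + 1 = S.card) (hcard' : A'.card + 1 = S.card)
    (hFA : Fmem HF la A) (hFA' : Fmem HF la A') : A = A' := by
  by_contra hne
  have hAX : A ⊆ X := hA.trans hSX
  have hA'X : A' ⊆ X := hA'.trans hSX
  have hSr : S.card ≤ r := hX ▸ Finset.card_le_card hSX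
  have hU : (A ∪ A').card ≤ S.card := Finset.card_le_card (Finset.union_subset hA hA')
  have hI : (A ∪ A').card + (A ∩ A').card = A.card + A'.card :=
    Finset.card_union_add_card_inter A A'
  have h := lemF hdist hlaX hla hlal hAX hA'X hFA hFA' hne (by omega) (by omega)
  omega

include hdist hlbX hlb hlbl hX in
lemma Gpair_unique {S A A' : Finset α} (hSX : S ⊆ X)
    (hA : A ⊆ S) (hA' : A' ⊆ S) (hcard : A.card + 1 = S.card) (hcard' : A'.card + 1 = S.card)
    (hGA : Gmem HF X lb A) (hGA' : Gmem HF X lb A') : A = A' := by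
  by_contra hne
  have hAX : A ⊆ X := hA.trans hSX
  have hA'X : A' ⊆ X := hA'.trans hSX
  have hSr : S.card ≤ r := hX ▸ Finset.card_le_card hSX
  have hU : (A ∪ A').card ≤ S.card := Finset.card_le_card (Finset.union_subset hA hA')
  have hI : (A ∪ A').card + (A ∩ A').card = A.card + A'.card :=
    Finset.card_union_add_card_inter A A'
  have h := lemG hdist hlbX hlb hlbl hX hAX hA'X hGA hGA' hne (by omega) (by omega)
  omega

include hdist hlaX hla hlal hX in
lemma Fcross12 {x : α} {A : Finset α} (hx : x ∈ X) (hA : A ⊆ X) (hAc : A.card = 2)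
    (hF1 : Fmem HF la {x}) (hF2 : Fmem HF la A) : x ∉ A := by
  intro hxA
  have hne : ({x} : Finset α) ≠ A := by
    intro h
    rw [← h] at hAc
    simp at hAc
  have h2r : 2 ≤ r := by
    rw [← hX]
    calc 2 = A.card := hAc.symm
    _ ≤ X.card := Finset.card_le_card hA
  have h := lemF hdist hlaX hla hlal (Finset.singleton_subset_iff.mpr hx) hA hF1 hF2 hne
    (by simp [hAc]) (by omega)
  have hxin : ({x} : Finset α) ∩ A = {x} := by
    rw [Finset.inter_eq_left]
    simpa using hxA
  rw [hxin] at h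
  simp only [Finset.card_singleton] at h
  omega

include hdist hlbX hlb hlbl hX in
lemma Gcross12 {x : α} {A : Finset α} (hx : x ∈ X) (hA : A ⊆ X) (hAc : A.card = 2)
    (hG1 : Gmem HF X lb {x}) (hG2 : Gmem HF X lb A) : x ∉ A := by
  intro hxA
  have hne : ({x} : Finset α) ≠ A := by
    intro h
    rw [← h] at hAc
    simp at hAc
  have h2r : 2 ≤ r := by
    rw [← hX]
    calc 2 = A.card := hAc.symm
    _ ≤ X.card := Finset.card_le_card hA
  have h := lemG hdist hlbX hlb hlbl hX (Finset.singleton_subset_iff.mpr hx) hA hG1 hG2 hne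
    (by simp [hAc]) (by omega)
  have hxin : ({x} : Finset α) ∩ A = {x} := by
    rw [Finset.inter_eq_left]
    simpa using hxA
  rw [hxin] at h
  simp only [Finset.card_singleton] at h
  omega

end WithHyps

end AliveAnalysis


section FinsetHelpers

lemma erase_pair_left {x y : α} (h : x ≠ y) : ({x, y} : Finset α).erase x = {y} := by
  ext a
  simp only [Finset.mem_erase, Finset.mem_insert, Finset.mem_singleton]
  constructor
  · rintro ⟨h1, rfl | rfl⟩
    · exact absurd rfl h1
    · rfl
  · rintro rfl
    exact ⟨fun hh => h hh.symm, Or.inr rfl⟩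

lemma erase_pair_right {x y : α} (h : x ≠ y) : ({x, y} : Finset α).erase y = {x} := by
  rw [Finset.pair_comm]
  exact erase_pair_left h.symm

lemma erase_triple_1 {x y z : α} (hxy : x ≠ y) (hxz : x ≠ z) :
    ({x, y, z} : Finset α).erase x = {y, z} := by
  ext a
  simp only [Finset.mem_erase, Finset.mem_insert, Finset.mem_singleton]
  constructor
  · rintro ⟨h1, rfl | rfl | rfl⟩
    · exact absurd rfl h1
    · exact Or.inl rfl
    · exact Or.inr rfl
  · rintro (rfl | rfl)
    · exact ⟨fun hh => hxy hh.symm, Or.inr (Or.inl rfl)⟩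
    · exact ⟨fun hh => hxz hh.symm, Or.inr (Or.inr rfl)⟩

lemma erase_triple_2 {x y z : α} (hxy : x ≠ y) (hyz : y ≠ z) :
    ({x, y, z} : Finset α).erase y = {x, z} := by
  have : ({x, y, z} : Finset α) = {y, x, z} := by
    ext a
    simp only [Finset.mem_insert, Finset.mem_singleton]
    tauto
  rw [this]
  exact erase_triple_1 hxy.symm hyz

lemma erase_triple_3 {x y z : α} (hxz : x ≠ z) (hyz : y ≠ z) :
    ({x, y, z} : Finset α).erase z = {x, y} := by
  have : ({x, y, z} : Finset α) = {z, x, y} := by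
    ext a
    simp only [Finset.mem_insert, Finset.mem_singleton]
    tauto
  rw [this]
  exact erase_triple_1 hxz.symm hyz.symm

open Classical in
/-- two-class pigeonhole -/
lemma pigeon2 {S : Finset α} (C1 C2 : α → Prop)
    (h : ∀ x ∈ S, C1 x ∨ C2 x)
    (h1 : ∀ x ∈ S, ∀ y ∈ S, x ≠ y → C1 x → C1 y → False)
    (h2 : ∀ x ∈ S, ∀ y ∈ S, x ≠ y → C2 x → C2 y → False) :
    S.card ≤ 2 := by
  classical
  have hsub : S ⊆ S.filter C1 ∪ S.filter C2 := by
    intro x hx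
    rcases h x hx with hc | hc
    · exact Finset.mem_union_left _ (Finset.mem_filter.mpr ⟨hx, hc⟩)
    · exact Finset.mem_union_right _ (Finset.mem_filter.mpr ⟨hx, hc⟩)
  have c1 : (S.filter C1).card ≤ 1 := by
    rw [Finset.card_le_one]
    intro a ha b hb
    rw [Finset.mem_filter] at ha hb
    by_contra hne
    exact h1 a ha.1 b hb.1 hne ha.2 hb.2
  have c2 : (S.filter C2).card ≤ 1 := by
    rw [Finset.card_le_one]
    intro a ha b hb
    rw [Finset.mem_filter] at ha hb
    by_contra hne
    exact h2 a ha.1 b hb.1 hne ha.2 hb.2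
  calc S.card ≤ (S.filter C1 ∪ S.filter C2).card := Finset.card_le_card hsub
  _ ≤ (S.filter C1).card + (S.filter C2).card := Finset.card_union_le _ _
  _ ≤ 2 := by omega

end FinsetHelpers

section AliveAnalysis2

variable {r q : ℕ} {HF : Fin q → Finset α} {X : Finset α} {la lb : List α}
variable (hdist : ∀ i j : Fin q, i ≠ j → (HF i ∩ HF j).card + 2 ≤ r)
variable (hX : X.card = r)
variable (hlaX : Disjoint la.toFinset X) (hlbX : Disjoint lb.toFinset X)
variable (hla : la.Nodup) (hlb : lb.Nodup) (hlal : la.length = r) (hlbl : lb.length = r)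

include hdist hX hlaX hlbX hla hlb hlal hlbl

lemma A2 {S : Finset α} (hS : S ⊆ X) (hSc : S.card = 2) (h : ¬ Alive r HF X la lb S) :
    BadP HF X la lb S ∨
      ∃ x y, x ≠ y ∧ S = {x, y} ∧ Fmem HF la {x} ∧ Gmem HF X lb {y} := by
  rcases notalive_cases h with ⟨_, hb⟩ | ⟨_, hall⟩
  · exact Or.inl hb
  · obtain ⟨x, y, hxy, rfl⟩ := Finset.card_eq_two.mp hSc
    have hxX : x ∈ X := hS (by simp)
    have hyX : y ∈ X := hS (by simp)
    have hbx : BadP HF X la lb {x} := by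
      have := hall y (by simp)
      rw [erase_pair_right hxy] at this
      exact (notalive_singleton (by simp) this).2
    have hby : BadP HF X la lb {y} := by
      have := hall x (by simp)
      rw [erase_pair_left hxy] at this
      exact (notalive_singleton (by simp) this).2
    rcases hbx with hFx | hGx <;> rcases hby with hFy | hGy
    · exact absurd (F1u hdist hX hlaX hla hlal hxX hyX hFx hFy) hxy
    · exact Or.inr ⟨x, y, hxy, rfl, hFx, hGy⟩
    · exact Or.inr ⟨y, x, hxy.symm, Finset.pair_comm x y, hFy, hGx⟩
    · exact absurd (G1u hdist hX hlbX hlb hlbl hxX hyX hGx hGy) hxy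

lemma E3 {S : Finset α} (hS : S ⊆ X) (hSc : S.card = 3)
    (hall : ∀ x ∈ S, ¬ Alive r HF X la lb (S.erase x)) :
    ∃ x y z, x ≠ y ∧ x ≠ z ∧ y ≠ z ∧ S = {x, y, z} ∧ Fmem HF la {x} ∧ Gmem HF X lb {y} ∧
      Fmem HF la ({y, z} : Finset α) ∧ Gmem HF X lb ({x, z} : Finset α) := by
  have hchild : ∀ w ∈ S, (S.erase w).card = 2 := by
    intro w hw
    rw [Finset.card_erase_of_mem hw, hSc]
  have hchildX : ∀ w ∈ S, S.erase w ⊆ X := fun w _ => (Finset.erase_subset _ _).trans hS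
  have cls : ∀ w ∈ S, BadP HF X la lb (S.erase w) ∨
      ∃ x y, x ≠ y ∧ S.erase w = {x, y} ∧ Fmem HF la {x} ∧ Gmem HF X lb {y} :=
    fun w hw => A2 hdist hX hlaX hlbX hla hlb hlal hlbl (hchildX w hw) (hchild w hw) (hall w hw)
  -- some child must have the pattern
  have hpat : ∃ w ∈ S, ∃ x y, x ≠ y ∧ S.erase w = {x, y} ∧
      Fmem HF la {x} ∧ Gmem HF X lb {y} := by
    by_contra hnone
    push_neg at hnone
    have hbad : ∀ w ∈ S, Fmem HF la (S.erase w) ∨ Gmem HF X lb (S.erase w) := by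
      intro w hw
      rcases cls w hw with hb | ⟨x, y, hxy, he, hFx, hGy⟩
      · exact hb
      · exact absurd he (by
          intro hee
          exact (hnone w hw x y hxy hee hFx) hGy)
    have hle := pigeon2 (fun w => Fmem HF la (S.erase w)) (fun w => Gmem HF X lb (S.erase w))
      hbad
      (fun a ha b hb hne hFa hFb => by
        have := Fpair_unique hdist hX hlaX hla hlal hS (Finset.erase_subset _ _)
          (Finset.erase_subset _ _) (by rw [hchild a ha, hSc]) (by rw [hchild b hb, hSc]) hFa hFb
        exact hne ((Finset.erase_inj S ha).mp this)
        )
      (fun a ha b hb hne hGa hGb => by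
        have := Gpair_unique hdist hX hlbX hlb hlbl hS (Finset.erase_subset _ _)
          (Finset.erase_subset _ _) (by rw [hchild a ha, hSc]) (by rw [hchild b hb, hSc]) hGa hGb
        exact hne ((Finset.erase_inj S ha).mp this))
    omega
  obtain ⟨z, hz, x, y, hxy, herase, hFx, hGy⟩ := hpat
  have hSxyz : S = {x, y, z} := by
    have h1 : S = insert z (S.erase z) := (Finset.insert_erase hz).symm
    rw [herase] at h1
    rw [h1]
    ext a
    simp only [Finset.mem_insert, Finset.mem_singleton]
    tauto
  have hxz : x ≠ z := by
    rintro rfl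
    have : x ∈ S.erase x := by rw [herase]; simp
    exact (Finset.notMem_erase _ _) this
  have hyz : y ≠ z := by
    rintro rfl
    have : y ∈ S.erase y := by rw [herase]; simp
    exact (Finset.notMem_erase _ _) this
  have hxX : x ∈ X := hS (by rw [hSxyz]; simp)
  have hyX : y ∈ X := hS (by rw [hSxyz]; simp)
  have hzX : z ∈ X := hS (by rw [hSxyz]; simp)
  -- the other two children are Bad
  have hyzX : ({y, z} : Finset α) ⊆ X := by
    intro a ha
    simp only [Finset.mem_insert, Finset.mem_singleton] at ha
    rcases ha with rfl | rfl <;> assumption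
  have hxzX : ({x, z} : Finset α) ⊆ X := by
    intro a ha
    simp only [Finset.mem_insert, Finset.mem_singleton] at ha
    rcases ha with rfl | rfl <;> assumption
  have heraseX : S.erase x = {y, z} := by rw [hSxyz]; exact erase_triple_1 hxy hxz
  have heraseY : S.erase y = {x, z} := by rw [hSxyz]; exact erase_triple_2 hxy hyz
  have hxS : x ∈ S := by rw [hSxyz]; simp
  have hyS : y ∈ S := by rw [hSxyz]; simp
  have hbadYZ : BadP HF X la lb ({y, z} : Finset α) := by
    rcases cls x hxS with hb | ⟨x', y', hxy', he', hFx', hGy'⟩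
    · rwa [heraseX] at hb
    · exfalso
      have hx'X : x' ∈ X := by
        have : x' ∈ S.erase x := by rw [he']; simp
        exact (hchildX x hxS) this
      have : x' = x := F1u hdist hX hlaX hla hlal hx'X hxX hFx' hFx
      rw [this] at he'
      have : x ∈ S.erase x := by rw [he']; simp
      exact (Finset.notMem_erase _ _) this
  have hbadXZ : BadP HF X la lb ({x, z} : Finset α) := by
    rcases cls y hyS with hb | ⟨x', y', hxy', he', hFx', hGy'⟩
    · rwa [heraseY] at hb
    · exfalso
      have hy'X : y' ∈ X := by
        have : y' ∈ S.erase y := by rw [he']; simp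
        exact (hchildX y hyS) this
      have : y' = y := G1u hdist hX hlbX hlb hlbl hy'X hyX hGy' hGy
      rw [this] at he'
      have : y ∈ S.erase y := by rw [he']; simp
      exact (Finset.notMem_erase _ _) this
  have hGxz : Gmem HF X lb ({x, z} : Finset α) := by
    rcases hbadXZ with hF | hG
    · exfalso
      exact (Fcross12 hdist hX hlaX hla hlal hxX hxzX (by
        rw [Finset.card_insert_of_notMem (by simp [hxz]), Finset.card_singleton]) hFx hF)
        (by simp)
    · exact hG
  have hFyz : Fmem HF la ({y, z} : Finset α) := by
    rcases hbadYZ with hF | hG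
    · exact hF
    · exfalso
      exact (Gcross12 hdist hX hlbX hlb hlbl hyX hyzX (by
        rw [Finset.card_insert_of_notMem (by simp [hyz]), Finset.card_singleton]) hGy hG)
        (by simp)
  exact ⟨x, y, z, hxy, hxz, hyz, hSxyz, hFx, hGy, hFyz, hGxz⟩

lemma D3u {S S' : Finset α} (hS : S ⊆ X) (hS' : S' ⊆ X)
    (p : ∃ x y z, x ≠ y ∧ x ≠ z ∧ y ≠ z ∧ S = {x, y, z} ∧ Fmem HF la {x} ∧ Gmem HF X lb {y} ∧
      Fmem HF la ({y, z} : Finset α) ∧ Gmem HF X lb ({x, z} : Finset α))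
    (p' : ∃ x y z, x ≠ y ∧ x ≠ z ∧ y ≠ z ∧ S' = {x, y, z} ∧ Fmem HF la {x} ∧ Gmem HF X lb {y} ∧
      Fmem HF la ({y, z} : Finset α) ∧ Gmem HF X lb ({x, z} : Finset α)) :
    S = S' := by
  obtain ⟨x, y, z, hxy, hxz, hyz, rfl, hFx, hGy, hFyz, hGxz⟩ := p
  obtain ⟨x', y', z', hxy', hxz', hyz', rfl, hFx', hGy', hFyz', hGxz'⟩ := p'
  have hxX : x ∈ X := hS (by simp)
  have hyX : y ∈ X := hS (by simp)
  have hzX : z ∈ X := hS (by simp)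
  have hx'X : x' ∈ X := hS' (by simp)
  have hy'X : y' ∈ X := hS' (by simp)
  have hz'X : z' ∈ X := hS' (by simp)
  have hxx : x = x' := F1u hdist hX hlaX hla hlal hxX hx'X hFx hFx'
  have hyy : y = y' := G1u hdist hX hlbX hlb hlbl hyX hy'X hGy hGy'
  subst hxx
  subst hyy
  have hzz : z = z' := by
    by_contra hne
    have hne' : ({y, z} : Finset α) ≠ ({y, z'} : Finset α) := by
      intro he
      have : z ∈ ({y, z'} : Finset α) := by rw [← he]; simp
      simp only [Finset.mem_insert, Finset.mem_singleton] at this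
      rcases this with h | h
      · exact hyz h.symm
      · exact hne h
    have hsub1 : ({y, z} : Finset α) ⊆ X := by
      intro a ha
      simp only [Finset.mem_insert, Finset.mem_singleton] at ha
      rcases ha with rfl | rfl <;> assumption
    have hsub2 : ({y, z'} : Finset α) ⊆ X := by
      intro a ha
      simp only [Finset.mem_insert, Finset.mem_singleton] at ha
      rcases ha with rfl | rfl <;> assumption
    have hc1 : ({y, z} : Finset α).card = 2 := by
      rw [Finset.card_insert_of_notMem (by simp [hyz]), Finset.card_singleton]
    have hc2 : ({y, z'} : Finset α).card = 2 := by
      rw [Finset.card_insert_of_notMem (by simp [hyz']), Finset.card_singleton]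
    have h := lemF hdist hlaX hla hlal hsub1 hsub2 hFyz hFyz' hne'
      (by rw [hc1, hc2]) (by rw [hc2, ← hX, ← hc2]; exact Finset.card_le_card hsub2)
    have hy_in : y ∈ ({y, z} : Finset α) ∩ ({y, z'} : Finset α) := by simp
    have : 1 ≤ (({y, z} : Finset α) ∩ ({y, z'} : Finset α)).card :=
      Finset.card_pos.mpr ⟨y, hy_in⟩
    omega
  rw [hzz]

end AliveAnalysis2


section AliveAnalysis3

variable {r q : ℕ} {HF : Fin q → Finset α} {X : Finset α} {la lb : List α}
variable (hdist : ∀ i j : Fin q, i ≠ j → (HF i ∩ HF j).card + 2 ≤ r)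
variable (hX : X.card = r)
variable (hlaX : Disjoint la.toFinset X) (hlbX : Disjoint lb.toFinset X)
variable (hla : la.Nodup) (hlb : lb.Nodup) (hlal : la.length = r) (hlbl : lb.length = r)

include hdist hX hlaX hlbX hla hlb hlal hlbl

lemma DGE4 : ∀ n : ℕ, 4 ≤ n → ∀ S : Finset α, S.card = n → S ⊆ X →
    (∀ x ∈ S, ¬ Alive r HF X la lb (S.erase x)) → False := by
  intro n
  induction n using Nat.strong_induction_on with
  | _ n ih =>
    intro hn4 S hScard hSX hall
    have hchildc : ∀ w ∈ S, (S.erase w).card = n - 1 := by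
      intro w hw
      rw [Finset.card_erase_of_mem hw, hScard]
    have hchildX : ∀ w ∈ S, S.erase w ⊆ X := fun w _ => (Finset.erase_subset _ _).trans hSX
    have cover : ∀ w ∈ S, (Fmem HF la (S.erase w) ∨ Gmem HF X lb (S.erase w)) ∨
        (∀ u ∈ S.erase w, ¬ Alive r HF X la lb ((S.erase w).erase u)) := by
      intro w hw
      rcases notalive_cases (hall w hw) with ⟨_, hb⟩ | ⟨_, hkids⟩
      · exact Or.inl hb
      · exact Or.inr hkids
    have hle := pigeon3 (fun w => Fmem HF la (S.erase w)) (fun w => Gmem HF X lb (S.erase w))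
      (fun w => (∀ u ∈ S.erase w, ¬ Alive r HF X la lb ((S.erase w).erase u)))
      (fun w hw => by
        rcases cover w hw with (h | h) | h
        · exact Or.inl h
        · exact Or.inr (Or.inl h)
        · exact Or.inr (Or.inr h))
      (fun a ha b hb hne hFa hFb => by
        have := Fpair_unique hdist hX hlaX hla hlal hSX (Finset.erase_subset _ _)
          (Finset.erase_subset _ _) (by rw [hchildc a ha, hScard]; omega)
          (by rw [hchildc b hb, hScard]; omega) hFa hFb
        exact hne ((Finset.erase_inj S ha).mp this))
      (fun a ha b hb hne hGa hGb => by
        have := Gpair_unique hdist hX hlbX hlb hlbl hSX (Finset.erase_subset _ _)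
          (Finset.erase_subset _ _) (by rw [hchildc a ha, hScard]; omega)
          (by rw [hchildc b hb, hScard]; omega) hGa hGb
        exact hne ((Finset.erase_inj S ha).mp this))
      (fun a ha b hb hne hDa hDb => by
        rcases Nat.lt_or_ge n 5 with h5 | h5
        · -- n = 4 : children are triples, use E3 + D3u
          have hn4' : n = 4 := by omega
          have pa := E3 hdist hX hlaX hlbX hla hlb hlal hlbl (hchildX a ha)
            (by rw [hchildc a ha, hn4']) hDa
          have pb := E3 hdist hX hlaX hlbX hla hlb hlal hlbl (hchildX b hb)
            (by rw [hchildc b hb, hn4']) hDb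
          have := D3u hdist hX hlaX hlbX hla hlb hlal hlbl (hchildX a ha) (hchildX b hb) pa pb
          exact hne ((Finset.erase_inj S ha).mp this)
        · -- n ≥ 5 : recurse into the child
          exact ih (n - 1) (by omega) (by omega) (S.erase a) (hchildc a ha) (hchildX a ha) hDa)
    omega

variable (hlalb : la = lb ∨ Disjoint la.toFinset lb.toFinset)

include hlalb in
lemma r2contra {x y : α} (hxX : x ∈ X) (hyX : y ∈ X) (hxy : x ≠ y) (hr2 : r = 2)
    (hF : Fmem HF la {x}) (hG : Gmem HF X lb {y}) : False := by
  obtain ⟨i, hi⟩ := hF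
  obtain ⟨i', hi'⟩ := hG
  simp only [Finset.card_singleton] at hi hi'
  have hxi : x ∈ HF i := by rw [← hi]; simp
  have hxi' : x ∈ HF i' := by
    rw [← hi']
    apply Finset.mem_union_left
    simp [Finset.mem_sdiff, hxX, hxy]
  have hii : i = i' := by
    by_contra hne
    have := hdist i i' hne
    have : 1 ≤ (HF i ∩ HF i').card := Finset.card_pos.mpr ⟨x, Finset.mem_inter.mpr ⟨hxi, hxi'⟩⟩
    omega
  subst hii
  have heq := hi.trans hi'.symm
  -- pick the element of la.drop 1
  have hcard : (la.drop 1).toFinset.card = 1 := by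
    rw [drop_toFinset_card hla, hlal, hr2]
  obtain ⟨w, hw⟩ := Finset.card_eq_one.mp hcard
  have hwmem : w ∈ (la.drop 1).toFinset := by rw [hw]; simp
  have hwla : w ∈ la.toFinset := drop_toFinset_subset la 1 hwmem
  have hwX : w ∉ X := Finset.disjoint_left.mp hlaX hwla
  have hwrhs : w ∈ (X \ {y}) ∪ (lb.take 1).toFinset := by
    rw [← heq]
    exact Finset.mem_union_left _ hwmem
  have hwtake : w ∈ (lb.take 1).toFinset := by
    rcases Finset.mem_union.mp hwrhs with h | h
    · exact absurd (Finset.mem_sdiff.mp h).1 hwX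
    · exact h
  rcases hlalb with rfl | hdj
  · exact Finset.disjoint_left.mp (take_drop_disjoint hla 1) hwtake hwmem
  · exact Finset.disjoint_left.mp hdj hwla (take_toFinset_subset _ _ hwtake)

end AliveAnalysis3


section TopLemma

variable {r q : ℕ} {HF : Fin q → Finset α} {X : Finset α} {la lb : List α}
variable (hdist : ∀ i j : Fin q, i ≠ j → (HF i ∩ HF j).card + 2 ≤ r)
variable (hX : X.card = r)
variable (hlaX : Disjoint la.toFinset X) (hlbX : Disjoint lb.toFinset X)
variable (hla : la.Nodup) (hlb : lb.Nodup) (hlal : la.length = r) (hlbl : lb.length = r)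
variable (hlalb : la = lb ∨ Disjoint la.toFinset lb.toFinset)

include hdist hX hlaX hlbX hla hlb hlal hlbl hlalb in
lemma top_alive : Alive r HF X la lb X ∨ (r = 3 ∧ StuckP HF X la lb) := by
  by_cases hA : Alive r HF X la lb X
  · exact Or.inl hA
  rcases notalive_cases hA with ⟨hlt, _⟩ | ⟨h2r, hall⟩
  · rw [hX] at hlt; omega
  rw [hX] at h2r
  rcases Nat.lt_or_ge r 4 with h4 | h4
  · by_cases hr3 : r = 3
    · subst hr3
      obtain ⟨x, y, z, hxy, hxz, hyz, hSxyz, hFx, hGy, hFyz, hGxz⟩ :=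
        E3 hdist hX hlaX hlbX hla hlb hlal hlbl (subset_refl X) hX hall
      exact Or.inr ⟨rfl, x, y, z, hxy, hxz, hyz, hSxyz, hFx, hGy, hFyz, hGxz⟩
    · -- r = 2
      have hr2 : r = 2 := by omega
      exfalso
      obtain ⟨u, v, huv, hXuv⟩ := Finset.card_eq_two.mp (by rw [hX, hr2] : X.card = 2)
      have huX : u ∈ X := by rw [hXuv]; simp
      have hvX : v ∈ X := by rw [hXuv]; simp
      have hXe1 : X.erase v = {u} := by
        rw [hXuv]; exact erase_pair_right huv
      have hXe2 : X.erase u = {v} := by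
        rw [hXuv]; exact erase_pair_left huv
      have hbu : BadP HF X la lb {u} := by
        have := hall v hvX
        rw [hXe1] at this
        exact (notalive_singleton (by simp) this).2
      have hbv : BadP HF X la lb {v} := by
        have := hall u huX
        rw [hXe2] at this
        exact (notalive_singleton (by simp) this).2
      rcases hbu with hFu | hGu <;> rcases hbv with hFv | hGv
      · exact huv (F1u hdist hX hlaX hla hlal huX hvX hFu hFv)
      · exact r2contra hdist hX hlaX hlbX hla hlb hlal hlbl hlalb huX hvX huv hr2 hFu hGv
      · exact r2contra hdist hX hlaX hlbX hla hlb hlal hlbl hlalb hvX huX huv.symm hr2 hFv hGu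
      · exact huv (G1u hdist hX hlbX hlb hlbl huX hvX hGu hGv)
  · exact absurd (DGE4 hdist hX hlaX hlbX hla hlb hlal hlbl r h4 X hX (subset_refl X) hall)
      (fun h => h)

end TopLemma

section Chain

variable {r q : ℕ} {HF : Fin q → Finset α} {X : Finset α} {la lb : List α}

lemma chain_of_alive : ∀ n (A : Finset α), A.card = n → Alive r HF X la lb A →
    ∃ l : List α, l.Nodup ∧ l.toFinset = A ∧
      (∀ t, 0 < t → t < r → t ≤ l.length → ¬ BadP HF X la lb (l.take t).toFinset) := by
  intro n
  induction n with
  | zero =>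
    intro A hA _
    refine ⟨[], by simp, by simp [Finset.card_eq_zero.mp hA], ?_⟩
    intro t ht _ htl
    simp at htl
    omega
  | succ n ih =>
    intro A hA hAlive
    rcases Nat.eq_zero_or_pos n with hn0 | hnpos
    · -- A is a singleton
      subst hn0
      obtain ⟨x, rfl⟩ := Finset.card_eq_one.mp hA
      refine ⟨[x], by simp, by simp, ?_⟩
      intro t ht htr htl
      simp only [List.length_singleton] at htl
      have ht1 : t = 1 := by omega
      subst ht1
      have h1 : (([x] : List α).take 1).toFinset = {x} := by simp
      rw [h1]
      exact (alive_iff _).mp hAlive |>.1 (by simp; omega)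
    · have h2 : 2 ≤ A.card := by omega
      obtain ⟨x, hx, hAl⟩ := ((alive_iff A).mp hAlive).2 h2
      obtain ⟨l', hnd, hfs, hpre⟩ := ih (A.erase x) (by rw [Finset.card_erase_of_mem hx, hA]; omega) hAl
      refine ⟨l' ++ [x], ?_, ?_, ?_⟩
      · rw [List.nodup_append']
        refine ⟨hnd, by simp, ?_⟩
        intro a ha hmem
        simp only [List.mem_singleton] at hmem
        rw [hmem] at ha
        have : x ∈ A.erase x := by rw [← hfs]; exact List.mem_toFinset.mpr ha
        exact (Finset.notMem_erase _ _) this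
      · rw [List.toFinset_append, hfs]
        simp only [List.toFinset_cons, List.toFinset_nil, LawfulSingleton.insert_empty_eq]
        rw [Finset.union_comm]
        exact Finset.insert_erase hx
      · intro t ht htr htl
        simp only [List.length_append, List.length_singleton] at htl
        rcases Nat.lt_or_ge t (l'.length + 1) with hlt | hge
        · have hts : (l' ++ [x]).take t = l'.take t := by
            rw [List.take_append]
            have h0 : t - l'.length = 0 := by omega
            rw [h0]
            simp
          rw [hts]
          exact hpre t ht htr (by omega)
        · have ht' : t = l'.length + 1 := by omega
          have hts : (l' ++ [x]).take t = l' ++ [x] := by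
            apply List.take_of_length_le
            simp only [List.length_append, List.length_singleton]
            omega
          rw [hts]
          have hfull : (l' ++ [x]).toFinset = A := by
            rw [List.toFinset_append, hfs]
            simp only [List.toFinset_cons, List.toFinset_nil, LawfulSingleton.insert_empty_eq]
            rw [Finset.union_comm]
            exact Finset.insert_erase hx
          rw [hfull]
          have hlen' : l'.length = n := by
            have hh := List.toFinset_card_of_nodup hnd
            rw [hfs, Finset.card_erase_of_mem hx, hA] at hh
            omega
          exact ((alive_iff A).mp hAlive).1 (by omega)

end Chain


section TS

variable {r q : ℕ} {HF : Fin q → Finset α} {X : Finset α} {la lb : List α}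
variable (hdist : ∀ i j : Fin q, i ≠ j → (HF i ∩ HF j).card + 2 ≤ r)
variable (hX : X.card = r)
variable (hlaX : Disjoint la.toFinset X) (hlbX : Disjoint lb.toFinset X)
variable (hla : la.Nodup) (hlb : lb.Nodup) (hlal : la.length = r) (hlbl : lb.length = r)
variable (hlalb : la = lb ∨ Disjoint la.toFinset lb.toFinset)

include hdist hX hlaX hlbX hla hlb hlal hlbl hlalb in
lemma TSmain :
    (∃ lx : List α, lx.Nodup ∧ lx.toFinset = X ∧ lx.length = r ∧
      PairGood r HF la lx ∧ PairGood r HF lx lb) ∨ (r = 3 ∧ StuckP HF X la lb) := by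
  rcases top_alive hdist hX hlaX hlbX hla hlb hlal hlbl hlalb with hAlive | hstuck
  · left
    obtain ⟨lx, hnd, hfs, hpre⟩ := chain_of_alive X.card X rfl hAlive
    have hlen : lx.length = r := by
      rw [← List.toFinset_card_of_nodup hnd, hfs, hX]
    refine ⟨lx, hnd, hfs, hlen, ?_, ?_⟩
    · intro t ht htr i heq
      rw [List.toFinset_append] at heq
      have hcard : (lx.take t).toFinset.card = t :=
        take_toFinset_card hnd (by omega)
      apply hpre t ht htr (by omega)
      left
      exact ⟨i, by rw [hcard, heq]⟩
    · intro t ht htr i heq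
      rw [List.toFinset_append] at heq
      rw [drop_toFinset_eq_sdiff hnd, hfs] at heq
      have hcard : (lx.take t).toFinset.card = t :=
        take_toFinset_card hnd (by omega)
      apply hpre t ht htr (by omega)
      right
      exact ⟨i, by rw [hcard, heq]⟩
  · exact Or.inr hstuck

end TS

section Cyc

variable {r q : ℕ} {HF : Fin q → Finset α}

def GoodCyc (r : ℕ) {q : ℕ} (HF : Fin q → Finset α) (bs : List (List α)) : Prop :=
  ∀ j, PairGood r HF (bget bs j) (bget bs (j + 1))

lemma goodcyc_rotate {bs : List (List α)} (hbs : bs ≠ []) (h : GoodCyc r HF bs) (n : ℕ) :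
    GoodCyc r HF (bs.rotate n) := by
  intro j
  rw [bget_rotate bs hbs, bget_rotate bs hbs]
  have : j + 1 + n = (j + n) + 1 := by omega
  rw [this]
  exact h (j + n)

lemma bget_snoc_lt (bs : List (List α)) (x : List α) {j : ℕ} (hj : j < bs.length) :
    bget (bs ++ [x]) j = bget bs j := by
  unfold bget
  have h1 : (bs ++ [x]).length = bs.length + 1 := by simp
  rw [h1, Nat.mod_eq_of_lt (by omega), Nat.mod_eq_of_lt hj]
  rw [List.getD_eq_getElem _ _ (by simp; omega), List.getD_eq_getElem _ _ hj]
  exact List.getElem_append_left hj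

lemma bget_snoc_last (bs : List (List α)) (x : List α) :
    bget (bs ++ [x]) bs.length = x := by
  unfold bget
  have h1 : (bs ++ [x]).length = bs.length + 1 := by simp
  rw [h1, Nat.mod_eq_of_lt (by omega)]
  rw [List.getD_eq_getElem _ _ (by simp)]
  simp

lemma goodcyc_snoc {bs : List (List α)} (hbs : bs ≠ []) (lx : List α)
    (hG : GoodCyc r HF bs)
    (h1 : PairGood r HF (bget bs (bs.length - 1)) lx)
    (h2 : PairGood r HF lx (bget bs 0)) : GoodCyc r HF (bs ++ [lx]) := by
  have hc : 0 < bs.length := List.length_pos_iff.mpr hbs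
  have hlen : (bs ++ [lx]).length = bs.length + 1 := by simp
  have key : ∀ j', j' < bs.length + 1 →
      PairGood r HF (bget (bs ++ [lx]) j') (bget (bs ++ [lx]) (j' + 1)) := by
    intro j' hj'
    rcases Nat.lt_or_ge (j' + 1) bs.length with hlt | hge
    · rw [bget_snoc_lt bs lx (by omega), bget_snoc_lt bs lx hlt]
      exact hG j'
    · rcases Nat.eq_or_lt_of_le hge with heq | hgt
      · -- j' + 1 = bs.length
        rw [bget_snoc_lt bs lx (by omega), ← heq, bget_snoc_last]
        have : j' = bs.length - 1 := by omega
        rw [this]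
        exact h1
      · -- j' = bs.length
        have hj'' : j' = bs.length := by omega
        subst hj''
        rw [bget_snoc_last]
        have e0 : bget (bs ++ [lx]) (bs.length + 1) = bget (bs ++ [lx]) 0 := by
          have : (bs.length + 1) % (bs ++ [lx]).length = 0 := by
            rw [hlen, Nat.mod_self]
          rw [← bget_mod (bs ++ [lx]) (bs.length + 1), this]
        rw [e0, bget_snoc_lt bs lx hc]
        exact h2
  intro j
  have e1 : bget (bs ++ [lx]) j = bget (bs ++ [lx]) (j % (bs.length + 1)) := by
    rw [← hlen, bget_mod]
  have e2 : bget (bs ++ [lx]) (j + 1) = bget (bs ++ [lx]) (j % (bs.length + 1) + 1) := by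
    have q1 : bget (bs ++ [lx]) (j % (bs.length + 1) + 1)
        = bget (bs ++ [lx]) ((j % (bs.length + 1) + 1) % (bs.length + 1)) := by
      rw [← hlen, bget_mod]
    have q2 : (j % (bs.length + 1) + 1) % (bs.length + 1) = (j + 1) % (bs.length + 1) :=
      Nat.mod_add_mod j (bs.length + 1) 1
    rw [q1, q2, ← hlen, bget_mod]
  rw [e1, e2]
  exact key _ (Nat.mod_lt _ (by omega))

end Cyc


section NoDouble

variable {r q : ℕ} {HF : Fin q → Finset α} {X : Finset α}
variable (hdist : ∀ i j : Fin q, i ≠ j → (HF i ∩ HF j).card + 2 ≤ r)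

include hdist in
lemma pairdist (hr3 : r = 3) {A A' Q Q' : Finset α}
    (hQc : Q.card = 2) (hAX : Disjoint A X) (hA'X : Disjoint A' X)
    (hQX : Q ⊆ X) (hQ'X : Q' ⊆ X) (hAA : A ≠ A')
    (hi : ∃ i, A ∪ Q = HF i) (hi' : ∃ i, A' ∪ Q' = HF i) : Q ≠ Q' := by
  obtain ⟨i, hi⟩ := hi
  obtain ⟨i', hi'⟩ := hi'
  have hii : i ≠ i' := by
    rintro rfl
    apply hAA
    have h := hi.trans hi'.symm
    have e1 : (A ∪ Q) \ X = A := by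
      rw [Finset.union_sdiff_distrib, Finset.sdiff_eq_self_of_disjoint hAX,
        Finset.sdiff_eq_empty_iff_subset.mpr hQX, Finset.union_empty]
    have e2 : (A' ∪ Q') \ X = A' := by
      rw [Finset.union_sdiff_distrib, Finset.sdiff_eq_self_of_disjoint hA'X,
        Finset.sdiff_eq_empty_iff_subset.mpr hQ'X, Finset.union_empty]
    rw [← e1, ← e2, h]
  intro hQQ
  have hsub : Q ⊆ HF i ∩ HF i' := by
    apply Finset.subset_inter
    · rw [← hi]; exact Finset.subset_union_right
    · rw [← hi', ← hQQ]; exact Finset.subset_union_right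
  have := Finset.card_le_card hsub
  have := hdist i i' hii
  omega

include hdist in
lemma no_double_stuck (hr3 : r = 3) (hX : X.card = r) {u v w : List α}
    (hu : u.Nodup) (hv : v.Nodup) (hw : w.Nodup)
    (hul : u.length = r) (hvl : v.length = r) (hwl : w.length = r)
    (huX : Disjoint u.toFinset X) (hvX : Disjoint v.toFinset X) (hwX : Disjoint w.toFinset X)
    (huv : Disjoint u.toFinset v.toFinset) (hvw : Disjoint v.toFinset w.toFinset)
    (huw : u = w ∨ Disjoint u.toFinset w.toFinset)
    (s1 : StuckP HF X u v) (s2 : StuckP HF X v w) : False := by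
  obtain ⟨x, y, z, hxy, hxz, hyz, hXeq, _, hGy, hFyz, _⟩ := s1
  obtain ⟨x', y', z', hxy', hxz', hyz', hXeq', _, hGy', hFyz', _⟩ := s2
  have hc1 : ({y, z} : Finset α).card = 2 := by
    rw [Finset.card_insert_of_notMem (by simp [hyz]), Finset.card_singleton]
  obtain ⟨i1, hi1⟩ := hFyz
  rw [hc1] at hi1
  obtain ⟨i2, hi2⟩ := hGy
  rw [Finset.card_singleton, Finset.union_comm] at hi2
  have hc3 : ({y', z'} : Finset α).card = 2 := by
    rw [Finset.card_insert_of_notMem (by simp [hyz']), Finset.card_singleton]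
  obtain ⟨i3, hi3⟩ := hFyz'
  rw [hc3] at hi3
  obtain ⟨i4, hi4⟩ := hGy'
  rw [Finset.card_singleton, Finset.union_comm] at hi4
  -- the four A-sets
  set A1 : Finset α := (u.drop 2).toFinset with hA1
  set A2 : Finset α := (v.take 1).toFinset with hA2
  set A3 : Finset α := (v.drop 2).toFinset with hA3
  set A4 : Finset α := (w.take 1).toFinset with hA4
  -- the four Q-sets
  have hQ2eq : X \ ({y} : Finset α) = ({x, z} : Finset α) := by
    rw [Finset.sdiff_singleton_eq_erase, hXeq]
    exact erase_triple_2 hxy hyz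
  have hQ4eq : X \ ({y'} : Finset α) = ({x', z'} : Finset α) := by
    rw [Finset.sdiff_singleton_eq_erase, hXeq']
    exact erase_triple_2 hxy' hyz'
  rw [hQ2eq] at hi2
  rw [hQ4eq] at hi4
  have hc2 : ({x, z} : Finset α).card = 2 := by
    rw [Finset.card_insert_of_notMem (by simp [hxz]), Finset.card_singleton]
  have hc4 : ({x', z'} : Finset α).card = 2 := by
    rw [Finset.card_insert_of_notMem (by simp [hxz']), Finset.card_singleton]
  -- basic properties of the A-sets
  have hA1u : A1 ⊆ u.toFinset := drop_toFinset_subset u 2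
  have hA2v : A2 ⊆ v.toFinset := take_toFinset_subset v 1
  have hA3v : A3 ⊆ v.toFinset := drop_toFinset_subset v 2
  have hA4w : A4 ⊆ w.toFinset := take_toFinset_subset w 1
  have hA1X : Disjoint A1 X := Finset.disjoint_of_subset_left hA1u huX
  have hA2X : Disjoint A2 X := Finset.disjoint_of_subset_left hA2v hvX
  have hA3X : Disjoint A3 X := Finset.disjoint_of_subset_left hA3v hvX
  have hA4X : Disjoint A4 X := Finset.disjoint_of_subset_left hA4w hwX
  have hA1ne : A1.Nonempty := by
    rw [← Finset.card_pos, hA1, drop_toFinset_card hu, hul, hr3]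
    omega
  have hA2ne : A2.Nonempty := by
    rw [← Finset.card_pos, hA2, take_toFinset_card hv (by omega), ]
    omega
  have hA3ne : A3.Nonempty := by
    rw [← Finset.card_pos, hA3, drop_toFinset_card hv, hvl, hr3]
    omega
  have hA4ne : A4.Nonempty := by
    rw [← Finset.card_pos, hA4, take_toFinset_card hw (by omega)]
    omega
  have ne_of_dj : ∀ {B C : Finset α}, B.Nonempty → Disjoint B C → B ≠ C := by
    intro B C hne hdj heq
    obtain ⟨b, hb⟩ := hne
    exact Finset.disjoint_left.mp hdj hb (heq ▸ hb)
  -- pairwise distinctness of the A-sets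
  have hA12 : A1 ≠ A2 := ne_of_dj hA1ne
    (Finset.disjoint_of_subset_left hA1u (Finset.disjoint_of_subset_right hA2v huv))
  have hA13 : A1 ≠ A3 := ne_of_dj hA1ne
    (Finset.disjoint_of_subset_left hA1u (Finset.disjoint_of_subset_right hA3v huv))
  have hA23 : A2 ≠ A3 := by
    apply ne_of_dj hA2ne
    have h1 : Disjoint (v.take 1).toFinset (v.drop 1).toFinset := take_drop_disjoint hv 1
    exact Finset.disjoint_of_subset_right (drop_toFinset_mono v (by omega)) h1
  have hA24 : A2 ≠ A4 := ne_of_dj hA2ne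
    (Finset.disjoint_of_subset_left hA2v (Finset.disjoint_of_subset_right hA4w hvw))
  have hA34 : A3 ≠ A4 := ne_of_dj hA3ne
    (Finset.disjoint_of_subset_left hA3v (Finset.disjoint_of_subset_right hA4w hvw))
  have hA14 : A1 ≠ A4 := by
    rcases huw with rfl | hdj
    · exact ne_of_dj hA1ne (Finset.disjoint_of_subset_left
        (drop_toFinset_mono u (by omega)) (take_drop_disjoint hu 1).symm)
    · exact ne_of_dj hA1ne
        (Finset.disjoint_of_subset_left hA1u (Finset.disjoint_of_subset_right hA4w hdj))
  -- Q subsets of X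
  have hQ1X : ({y, z} : Finset α) ⊆ X := by
    rw [hXeq]
    intro a ha
    simp only [Finset.mem_insert, Finset.mem_singleton] at ha ⊢
    tauto
  have hQ2X : ({x, z} : Finset α) ⊆ X := by
    rw [hXeq]
    intro a ha
    simp only [Finset.mem_insert, Finset.mem_singleton] at ha ⊢
    tauto
  have hQ3X : ({y', z'} : Finset α) ⊆ X := by
    rw [hXeq']
    intro a ha
    simp only [Finset.mem_insert, Finset.mem_singleton] at ha ⊢
    tauto
  have hQ4X : ({x', z'} : Finset α) ⊆ X := by
    rw [hXeq']
    intro a ha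
    simp only [Finset.mem_insert, Finset.mem_singleton] at ha ⊢
    tauto
  -- the six distinctness facts
  have h12 : ({y, z} : Finset α) ≠ ({x, z} : Finset α) := by
    intro h
    have : y ∈ ({x, z} : Finset α) := by rw [← h]; simp
    simp only [Finset.mem_insert, Finset.mem_singleton] at this
    rcases this with h' | h'
    · exact hxy h'.symm
    · exact hyz h'
  have h34 : ({y', z'} : Finset α) ≠ ({x', z'} : Finset α) := by
    intro h
    have : y' ∈ ({x', z'} : Finset α) := by rw [← h]; simp
    simp only [Finset.mem_insert, Finset.mem_singleton] at this
    rcases this with h' | h'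
    · exact hxy' h'.symm
    · exact hyz' h'
  have h13 : ({y, z} : Finset α) ≠ ({y', z'} : Finset α) :=
    pairdist hdist hr3 hc1 hA1X hA3X hQ1X hQ3X hA13 ⟨i1, hi1⟩ ⟨i3, hi3⟩
  have h14 : ({y, z} : Finset α) ≠ ({x', z'} : Finset α) :=
    pairdist hdist hr3 hc1 hA1X hA4X hQ1X hQ4X hA14 ⟨i1, hi1⟩ ⟨i4, hi4⟩
  have h23 : ({x, z} : Finset α) ≠ ({y', z'} : Finset α) :=
    pairdist hdist hr3 hc2 hA2X hA3X hQ2X hQ3X hA23 ⟨i2, hi2⟩ ⟨i3, hi3⟩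
  have h24 : ({x, z} : Finset α) ≠ ({x', z'} : Finset α) :=
    pairdist hdist hr3 hc2 hA2X hA4X hQ2X hQ4X hA24 ⟨i2, hi2⟩ ⟨i4, hi4⟩
  -- four distinct 2-subsets of a 3-element set : contradiction
  have hfour : ({({y, z} : Finset α), ({x, z} : Finset α), ({y', z'} : Finset α),
      ({x', z'} : Finset α)} : Finset (Finset α)).card = 4 := by
    rw [Finset.card_insert_of_notMem (by simp [h12, h13, h14]),
      Finset.card_insert_of_notMem (by simp [h23, h24]),
      Finset.card_insert_of_notMem (by simp [h34]), Finset.card_singleton]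
  have hsubp : ({({y, z} : Finset α), ({x, z} : Finset α), ({y', z'} : Finset α),
      ({x', z'} : Finset α)} : Finset (Finset α)) ⊆ X.powersetCard 2 := by
    intro Q hQ
    simp only [Finset.mem_insert, Finset.mem_singleton] at hQ
    rw [Finset.mem_powersetCard]
    rcases hQ with rfl | rfl | rfl | rfl
    · exact ⟨hQ1X, hc1⟩
    · exact ⟨hQ2X, hc2⟩
    · exact ⟨hQ3X, hc3⟩
    · exact ⟨hQ4X, hc4⟩
  have hcard := Finset.card_le_card hsubp
  rw [hfour, Finset.card_powersetCard, hX, hr3] at hcard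
  norm_num at hcard

end NoDouble


section Init

variable {r q : ℕ} {HF : Fin q → Finset α} {X : Finset α}
variable (hdist : ∀ i j : Fin q, i ≠ j → (HF i ∩ HF j).card + 2 ≤ r)

lemma two_meet (hX3 : X.card = 3) {Q Q' : Finset α} (hQ : Q ⊆ X) (hQ' : Q' ⊆ X)
    (h2 : Q.card = 2) (h2' : Q'.card = 2) : ∃ t, t ∈ Q ∧ t ∈ Q' := by
  have hU : (Q ∪ Q').card ≤ 3 := by
    rw [← hX3]
    exact Finset.card_le_card (Finset.union_subset hQ hQ')
  have hI : (Q ∪ Q').card + (Q ∩ Q').card = Q.card + Q'.card :=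
    Finset.card_union_add_card_inter Q Q'
  have : 0 < (Q ∩ Q').card := by omega
  obtain ⟨t, ht⟩ := Finset.card_pos.mp this
  exact ⟨t, Finset.mem_inter.mp ht |>.1, Finset.mem_inter.mp ht |>.2⟩

include hdist in
lemma init3_contra (hr3 : r = 3) (hX : X.card = r) {a b c : α}
    (hab : a ≠ b) (hac : a ≠ c) (hbc : b ≠ c)
    (haX : a ∉ X) (hbX : b ∉ X) (hcX : c ∉ X)
    (s1 : StuckP HF X [a, b, c] [a, b, c]) (s2 : StuckP HF X [b, a, c] [b, a, c]) : False := by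
  obtain ⟨x, y, z, hxy, hxz, hyz, hXeq, hFx, _, hFyz, _⟩ := s1
  obtain ⟨x', y', z', hxy', hxz', hyz', hXeq', hFx', _, hFyz', _⟩ := s2
  have hX3 : X.card = 3 := by rw [hX, hr3]
  obtain ⟨i1, hi1⟩ := hFx
  simp only [Finset.card_singleton] at hi1
  have e1 : (([a, b, c] : List α).drop 1).toFinset = ({b, c} : Finset α) := by simp
  rw [e1] at hi1
  obtain ⟨i2, hi2⟩ := hFyz
  have hcyz : ({y, z} : Finset α).card = 2 := by
    rw [Finset.card_insert_of_notMem (by simp [hyz]), Finset.card_singleton]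
  rw [hcyz] at hi2
  have e2 : (([a, b, c] : List α).drop 2).toFinset = ({c} : Finset α) := by simp
  rw [e2] at hi2
  obtain ⟨i1', hi1'⟩ := hFx'
  simp only [Finset.card_singleton] at hi1'
  have e1' : (([b, a, c] : List α).drop 1).toFinset = ({a, c} : Finset α) := by simp
  rw [e1'] at hi1'
  obtain ⟨i2', hi2'⟩ := hFyz'
  have hcyz' : ({y', z'} : Finset α).card = 2 := by
    rw [Finset.card_insert_of_notMem (by simp [hyz']), Finset.card_singleton]
  rw [hcyz'] at hi2'
  have e2' : (([b, a, c] : List α).drop 2).toFinset = ({c} : Finset α) := by simp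
  rw [e2'] at hi2'
  -- memberships of x,y,z in X
  have hyX : y ∈ X := by rw [hXeq]; simp
  have hzX : z ∈ X := by rw [hXeq]; simp
  have hxX : x ∈ X := by rw [hXeq]; simp
  have hy'X : y' ∈ X := by rw [hXeq']; simp
  have hz'X : z' ∈ X := by rw [hXeq']; simp
  have hQX : ({y, z} : Finset α) ⊆ X := by
    intro t ht
    simp only [Finset.mem_insert, Finset.mem_singleton] at ht
    rcases ht with rfl | rfl <;> assumption
  have hQ'X : ({y', z'} : Finset α) ⊆ X := by
    intro t ht
    simp only [Finset.mem_insert, Finset.mem_singleton] at ht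
    rcases ht with rfl | rfl <;> assumption
  -- step 1 : i2 = i2'
  have hi2eq : i2 = i2' := by
    by_contra hne
    obtain ⟨t, ht1, ht2⟩ := two_meet hX3 hQX hQ'X hcyz hcyz'
    have htX : t ∈ X := hQX ht1
    have hct : c ≠ t := fun h => hcX (h ▸ htX)
    have hsub : ({c, t} : Finset α) ⊆ HF i2 ∩ HF i2' := by
      intro s hs
      simp only [Finset.mem_insert, Finset.mem_singleton] at hs
      rcases hs with rfl | rfl
      · exact Finset.mem_inter.mpr ⟨by rw [← hi2]; simp, by rw [← hi2']; simp⟩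
      · exact Finset.mem_inter.mpr ⟨by rw [← hi2]; exact Finset.mem_union_right _ ht1,
          by rw [← hi2']; exact Finset.mem_union_right _ ht2⟩
    have hc2 : ({c, t} : Finset α).card = 2 := by
      rw [Finset.card_insert_of_notMem (by simp [hct]), Finset.card_singleton]
    have := Finset.card_le_card hsub
    have := hdist i2 i2' hne
    omega
  -- step 2 : {y,z} = {y',z'}
  have hpair : ({y, z} : Finset α) = ({y', z'} : Finset α) := by
    subst hi2eq
    have heq := hi2.trans hi2'.symm
    ext t
    constructor
    · intro ht
      have : t ∈ ({c} : Finset α) ∪ {y', z'} := by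
        rw [← heq]
        exact Finset.mem_union_right _ ht
      rcases Finset.mem_union.mp this with h | h
      · exfalso
        simp only [Finset.mem_singleton] at h
        exact hcX (h ▸ hQX ht)
      · exact h
    · intro ht
      have : t ∈ ({c} : Finset α) ∪ {y, z} := by
        rw [heq]
        exact Finset.mem_union_right _ ht
      rcases Finset.mem_union.mp this with h | h
      · exfalso
        simp only [Finset.mem_singleton] at h
        exact hcX (h ▸ hQ'X ht)
      · exact h
  -- step 3 : x = x'
  have hxx' : x = x' := by
    have : x ∈ X := hxX
    rw [hXeq'] at this
    simp only [Finset.mem_insert, Finset.mem_singleton] at this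
    rcases this with h | h | h
    · exact h
    · exfalso
      have : x ∈ ({y', z'} : Finset α) := by simp [h]
      rw [← hpair] at this
      simp only [Finset.mem_insert, Finset.mem_singleton] at this
      rcases this with h' | h'
      · exact hxy h'
      · exact hxz h'
    · exfalso
      have : x ∈ ({y', z'} : Finset α) := by simp [h]
      rw [← hpair] at this
      simp only [Finset.mem_insert, Finset.mem_singleton] at this
      rcases this with h' | h'
      · exact hxy h'
      · exact hxz h'
  subst hxx'
  -- step 4 : the two singleton witnesses collide
  have hi1ne : i1 ≠ i1' := by
    rintro rfl
    have heq := hi1.trans hi1'.symm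
    have : b ∈ ({a, c} : Finset α) ∪ {x} := by
      rw [← heq]
      simp
    simp only [Finset.mem_union, Finset.mem_insert, Finset.mem_singleton] at this
    rcases this with (h | h) | h
    · exact hab h.symm
    · exact hbc h
    · exact hbX (h ▸ hxX)
  have hcx : c ≠ x := fun h => hcX (h ▸ hxX)
  have hsub : ({c, x} : Finset α) ⊆ HF i1 ∩ HF i1' := by
    intro s hs
    simp only [Finset.mem_insert, Finset.mem_singleton] at hs
    rcases hs with rfl | rfl
    · exact Finset.mem_inter.mpr ⟨by rw [← hi1]; simp, by rw [← hi1']; simp⟩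
    · exact Finset.mem_inter.mpr ⟨by rw [← hi1]; simp, by rw [← hi1']; simp⟩
  have hc2 : ({c, x} : Finset α).card = 2 := by
    rw [Finset.card_insert_of_notMem (by simp [hcx]), Finset.card_singleton]
  have := Finset.card_le_card hsub
  have := hdist i1 i1' hi1ne
  omega

include hdist in
lemma init_pair (B0 : Finset α) (hB0 : B0.card = r) (hX : X.card = r) (hr : 1 ≤ r)
    (hdj : Disjoint B0 X) :
    ∃ la lx : List α, la.Nodup ∧ la.toFinset = B0 ∧ la.length = r ∧
      lx.Nodup ∧ lx.toFinset = X ∧ lx.length = r ∧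
      PairGood r HF la lx ∧ PairGood r HF lx la := by
  by_cases hr3 : r = 3
  · obtain ⟨a, b, c, hab, hac, hbc, hB0eq⟩ := Finset.card_eq_three.mp (by rw [hB0, hr3])
    have hmem : ∀ s ∈ B0, s ∉ X := fun s hs => Finset.disjoint_left.mp hdj hs
    have haB : a ∈ B0 := by rw [hB0eq]; simp
    have hbB : b ∈ B0 := by rw [hB0eq]; simp
    have hcB : c ∈ B0 := by rw [hB0eq]; simp
    have h1nd : ([a, b, c] : List α).Nodup := by simp [hab, hac, hbc]
    have h1fs : ([a, b, c] : List α).toFinset = B0 := by rw [hB0eq]; simp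
    have h1len : ([a, b, c] : List α).length = r := by simp [hr3]
    have h2nd : ([b, a, c] : List α).Nodup := by simp [hab.symm, hac, hbc]
    have h2fs : ([b, a, c] : List α).toFinset = B0 := by
      rw [hB0eq]
      ext t
      simp only [List.toFinset_cons, List.toFinset_nil, LawfulSingleton.insert_empty_eq, Finset.mem_insert,
        Finset.mem_singleton]
      tauto
    have h2len : ([b, a, c] : List α).length = r := by simp [hr3]
    have hdX1 : Disjoint ([a, b, c] : List α).toFinset X := by rw [h1fs]; exact hdj
    have hdX2 : Disjoint ([b, a, c] : List α).toFinset X := by rw [h2fs]; exact hdj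
    rcases TSmain hdist hX hdX1 hdX1 h1nd h1nd h1len h1len (Or.inl rfl) with
      ⟨lx, hnd, hfs, hlen, hpg1, hpg2⟩ | ⟨_, st1⟩
    · exact ⟨[a, b, c], lx, h1nd, h1fs, h1len, hnd, hfs, hlen, hpg1, hpg2⟩
    rcases TSmain hdist hX hdX2 hdX2 h2nd h2nd h2len h2len (Or.inl rfl) with
      ⟨lx, hnd, hfs, hlen, hpg1, hpg2⟩ | ⟨_, st2⟩
    · exact ⟨[b, a, c], lx, h2nd, h2fs, h2len, hnd, hfs, hlen, hpg1, hpg2⟩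
    exact absurd (init3_contra hdist hr3 hX hab hac hbc (hmem a haB) (hmem b hbB) (hmem c hcB)
      st1 st2) (fun h => h)
  · set la := B0.toList with hla
    have hnd : la.Nodup := B0.nodup_toList
    have hfs : la.toFinset = B0 := Finset.toList_toFinset B0
    have hlen : la.length = r := by rw [hla, Finset.length_toList, hB0]
    have hdX : Disjoint la.toFinset X := by rw [hfs]; exact hdj
    rcases TSmain hdist hX hdX hdX hnd hnd hlen hlen (Or.inl rfl) with
      ⟨lx, hnd', hfs', hlen', hpg1, hpg2⟩ | ⟨h3, _⟩
    · exact ⟨la, lx, hnd, hfs, hlen, hnd', hfs', hlen', hpg1, hpg2⟩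
    · exact absurd h3 hr3

end Init


section CoreMain

variable {r q : ℕ} {HF : Fin q → Finset α}

lemma bget_mem {bs : List (List α)} (hbs : bs ≠ []) (j : ℕ) : bget bs j ∈ bs := by
  rw [bget_eq_get bs hbs]
  exact List.get_mem _ _

lemma bget_single (l : List α) (j : ℕ) : bget [l] j = l := by
  unfold bget
  rw [List.length_singleton, Nat.mod_one]
  rfl

lemma bget_disjoint {bs : List (List α)} (hbs : bs ≠ [])
    (hpw : List.Pairwise Disjoint (bs.map List.toFinset)) {j1 j2 : ℕ}
    (hne : j1 % bs.length ≠ j2 % bs.length) :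
    Disjoint (bget bs j1).toFinset (bget bs j2).toFinset := by
  have hlen : 0 < bs.length := List.length_pos_iff.mpr hbs
  rw [bget_eq_get bs hbs j1, bget_eq_get bs hbs j2]
  have hpw' := (List.pairwise_iff_get).mp hpw
  have hmaplen : (bs.map List.toFinset).length = bs.length := by simp
  have key : ∀ (i j : Fin bs.length), (i : ℕ) < j →
      Disjoint (bs.get i).toFinset (bs.get j).toFinset := by
    intro i j hij
    have := hpw' ⟨i, by omega⟩ ⟨j, by omega⟩ (by exact_mod_cast hij)
    simpa using this
  rcases Nat.lt_trichotomy (j1 % bs.length) (j2 % bs.length) with h | h | h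
  · exact key ⟨j1 % bs.length, Nat.mod_lt _ hlen⟩ ⟨j2 % bs.length, Nat.mod_lt _ hlen⟩ h
  · exact absurd h hne
  · exact (key ⟨j2 % bs.length, Nat.mod_lt _ hlen⟩ ⟨j1 % bs.length, Nat.mod_lt _ hlen⟩ h).symm

lemma bget_pair_left (u v : List α) (j : ℕ) (h : j % 2 = 0) : bget [u, v] j = u := by
  unfold bget
  have hl : ([u, v] : List (List α)).length = 2 := rfl
  rw [hl, h]
  rfl

lemma bget_pair_right (u v : List α) (j : ℕ) (h : j % 2 = 1) : bget [u, v] j = v := by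
  unfold bget
  have hl : ([u, v] : List (List α)).length = 2 := rfl
  rw [hl, h]
  rfl

theorem core (hr : 1 ≤ r)
    (hdist : ∀ i j : Fin q, i ≠ j → (HF i ∩ HF j).card + 2 ≤ r) :
    ∀ n (Bs : List (Finset α)), Bs.length = n → Bs ≠ [] → (∀ F ∈ Bs, F.card = r) →
      List.Pairwise Disjoint Bs → (∀ F ∈ Bs, ∀ i, F ≠ HF i) →
      ∃ bs : List (List α), (bs.map List.toFinset).Perm Bs ∧
        (∀ b ∈ bs, b.Nodup) ∧ (∀ b ∈ bs, b.length = r) ∧ GoodCyc r HF bs := by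
  intro n
  induction n using Nat.strong_induction_on with
  | _ n ih =>
    intro Bs hn hne hcard hpw hnotH
    match Bs, hn with
    | [], hn => exact absurd rfl hne
    | [B0], hn =>
      refine ⟨[B0.toList], by simp, by simp [Finset.nodup_toList], ?_, ?_⟩
      · intro b hb
        simp only [List.mem_singleton] at hb
        subst hb
        rw [Finset.length_toList]
        exact hcard B0 (by simp)
      · intro j t ht htr i heq
        rw [bget_single, bget_single, List.toFinset_append] at heq
        rw [Finset.union_comm, take_union_drop_toFinset, Finset.toList_toFinset] at heq
        exact hnotH B0 (by simp) i heq
    | [B0, X], hn =>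
      have hdj : Disjoint B0 X := (List.pairwise_cons.mp hpw).1 X (by simp)
      obtain ⟨la, lx, h1nd, h1fs, h1len, h2nd, h2fs, h2len, hpg1, hpg2⟩ :=
        init_pair hdist (B0 := B0) (X := X) (hcard B0 (by simp)) (hcard X (by simp)) hr hdj
      refine ⟨[la, lx], by simp [h1fs, h2fs], ?_, ?_, ?_⟩
      · intro b hb
        simp only [List.mem_cons, List.mem_singleton, List.not_mem_nil, or_false] at hb
        rcases hb with rfl | rfl <;> assumption
      · intro b hb
        simp only [List.mem_cons, List.mem_singleton, List.not_mem_nil, or_false] at hb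
        rcases hb with rfl | rfl <;> assumption
      · intro j
        rcases Nat.mod_two_eq_zero_or_one j with h | h
        · rw [bget_pair_left _ _ _ h, bget_pair_right _ _ _ (by omega)]
          exact hpg1
        · rw [bget_pair_right _ _ _ h, bget_pair_left _ _ _ (by omega)]
          exact hpg2
    | X :: B0 :: B1 :: rest, hn =>
      -- inductive step : insert X into an arrangement of the remaining blocks
      set Bs' : List (Finset α) := B0 :: B1 :: rest with hBs'
      have hXdj : ∀ F ∈ Bs', Disjoint X F := (List.pairwise_cons.mp hpw).1
      have hpw' : List.Pairwise Disjoint Bs' := (List.pairwise_cons.mp hpw).2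
      have hn3 : n = Bs'.length + 1 := by
        simp only [List.length_cons] at hn
        omega
      obtain ⟨bs, hperm, hnd, hlen, hG⟩ := ih Bs'.length (by omega) Bs' rfl (by simp [hBs'])
        (fun F hF => hcard F (List.mem_cons_of_mem _ hF)) hpw'
        (fun F hF => hnotH F (List.mem_cons_of_mem _ hF))
      have hbslen : bs.length = Bs'.length := by
        rw [← hperm.length_eq]
        simp
      have hc2 : 2 ≤ bs.length := by
        rw [hbslen]
        simp only [hBs', List.length_cons]
        omega
      have hbsne : bs ≠ [] := by
        intro h
        rw [h] at hc2
        simp at hc2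
      have hpwbs : List.Pairwise Disjoint (bs.map List.toFinset) :=
        (hperm.pairwise_iff (fun {_ _} h => Disjoint.symm h)).mpr hpw'
      have hbfacts : ∀ j, (bget bs j).Nodup ∧ (bget bs j).length = r ∧
          Disjoint (bget bs j).toFinset X := by
        intro j
        have hmem := bget_mem hbsne j
        refine ⟨hnd _ hmem, hlen _ hmem, ?_⟩
        have h1 : (bget bs j).toFinset ∈ bs.map List.toFinset := List.mem_map_of_mem hmem
        have h2 : (bget bs j).toFinset ∈ Bs' := hperm.subset h1
        exact (hXdj _ h2).symm
      have hXcard : X.card = r := hcard X (by simp)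
      -- adjacency disjointness for edges 0 and 1
      have hd01 : Disjoint (bget bs 0).toFinset (bget bs 1).toFinset := by
        apply bget_disjoint hbsne hpwbs
        rw [Nat.mod_eq_of_lt (by omega), Nat.mod_eq_of_lt (by omega)]
        omega
      have hd12 : Disjoint (bget bs 1).toFinset (bget bs 2).toFinset := by
        apply bget_disjoint hbsne hpwbs
        rw [Nat.mod_eq_of_lt (by omega)]
        rcases Nat.eq_or_lt_of_le hc2 with h2 | h2
        · rw [← h2, Nat.mod_self]
          omega
        · rw [Nat.mod_eq_of_lt (by omega)]
          omega
      have hd02 : bs.length = 2 ∧ bget bs 2 = bget bs 0 ∨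
          Disjoint (bget bs 0).toFinset (bget bs 2).toFinset := by
        rcases Nat.eq_or_lt_of_le hc2 with h2 | h2
        · left
          refine ⟨h2.symm, ?_⟩
          have hm : (2 : ℕ) % bs.length = 0 := by rw [← h2, Nat.mod_self]
          calc bget bs 2 = bget bs (2 % bs.length) := (bget_mod bs 2).symm
          _ = bget bs 0 := by rw [hm]
        · right
          apply bget_disjoint hbsne hpwbs
          rw [Nat.mod_eq_of_lt (by omega), Nat.mod_eq_of_lt (by omega)]
          omega
      -- find a good edge e ∈ {0, 1}
      have hedge : ∃ e, e < bs.length ∧ ∃ lx : List α, lx.Nodup ∧ lx.toFinset = X ∧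
          lx.length = r ∧ PairGood r HF (bget bs e) lx ∧ PairGood r HF lx (bget bs (e + 1)) := by
        obtain ⟨h0nd, h0len, h0X⟩ := hbfacts 0
        obtain ⟨h1nd, h1len, h1X⟩ := hbfacts 1
        obtain ⟨h2nd', h2len', h2X'⟩ := hbfacts 2
        rcases TSmain hdist hXcard h0X h1X h0nd h1nd h0len h1len (Or.inr hd01) with
          ⟨lx, hprops⟩ | ⟨hr3, st0⟩
        · exact ⟨0, by omega, lx, hprops⟩
        rcases TSmain hdist hXcard h1X h2X' h1nd h2nd' h1len h2len' (Or.inr hd12) with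
          ⟨lx, hprops⟩ | ⟨_, st1⟩
        · exact ⟨1, by omega, lx, hprops⟩
        exfalso
        have huw : bget bs 0 = bget bs 2 ∨
            Disjoint (bget bs 0).toFinset (bget bs 2).toFinset := by
          rcases hd02 with ⟨_, h⟩ | h
          · exact Or.inl h.symm
          · exact Or.inr h
        exact no_double_stuck hdist hr3 hXcard h0nd h1nd h2nd' h0len h1len h2len'
          h0X h1X h2X' hd01 hd12 huw st0 st1
      obtain ⟨e, he, lx, hxnd, hxfs, hxlen, hpgl, hpgr⟩ := hedge
      -- build the new arrangement
      set bs2 : List (List α) := bs.rotate (e + 1) ++ [lx] with hbs2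
      have hrotne : bs.rotate (e + 1) ≠ [] := by
        intro h
        have := congrArg List.length h
        simp at this
        exact hbsne this
      have hrotlen : (bs.rotate (e + 1)).length = bs.length := List.length_rotate _ _
      have hGrot : GoodCyc r HF (bs.rotate (e + 1)) := goodcyc_rotate hbsne hG (e + 1)
      have hkey1 : bget (bs.rotate (e + 1)) ((bs.rotate (e + 1)).length - 1) = bget bs e := by
        rw [bget_rotate bs hbsne, hrotlen]
        have h1 : bs.length - 1 + (e + 1) = bs.length + e := by omega
        rw [h1]
        have h2 : (bs.length + e) % bs.length = e := by
          rw [Nat.add_mod_left]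
          exact Nat.mod_eq_of_lt he
        rw [← bget_mod bs (bs.length + e), h2]
      have hkey2 : bget (bs.rotate (e + 1)) 0 = bget bs (e + 1) := by
        rw [bget_rotate bs hbsne]
        norm_num
      have hG2 : GoodCyc r HF bs2 := by
        apply goodcyc_snoc hrotne lx hGrot
        · rw [hkey1]; exact hpgl
        · rw [hkey2]; exact hpgr
      refine ⟨bs2, ?_, ?_, ?_, hG2⟩
      · -- permutation bookkeeping
        have e1 : bs2.map List.toFinset = (bs.map List.toFinset).rotate (e + 1) ++ [X] := by
          rw [hbs2, List.map_append, List.map_rotate]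
          simp [hxfs]
        rw [e1]
        have p1 : ((bs.map List.toFinset).rotate (e + 1) ++ [X]).Perm
            ((bs.map List.toFinset) ++ [X]) := (List.rotate_perm _ _).append_right _
        have p2 : ((bs.map List.toFinset) ++ [X]).Perm (X :: bs.map List.toFinset) :=
          (List.perm_append_singleton _ _)
        have p3 : (X :: bs.map List.toFinset).Perm (X :: Bs') := hperm.cons X
        exact (p1.trans p2).trans p3
      · intro b hb
        rw [hbs2, List.mem_append] at hb
        rcases hb with hb | hb
        · exact hnd b (List.mem_rotate.mp hb)
        · simp only [List.mem_singleton] at hb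
          subst hb
          exact hxnd
      · intro b hb
        rw [hbs2, List.mem_append] at hb
        rcases hb with hb | hb
        · exact hlen b (List.mem_rotate.mp hb)
        · simp only [List.mem_singleton] at hb
          subst hb
          exact hxlen

end CoreMain


section Assembly

variable {r q : ℕ} {HF : Fin q → Finset α}

lemma succ_mod_ne {len : ℕ} (hlen : 2 ≤ len) (j : ℕ) : (j + 1) % len ≠ j % len := by
  intro h
  rcases Nat.lt_or_ge (j % len + 1) len with hlt | hge
  · rw [← Nat.mod_add_mod, Nat.mod_eq_of_lt hlt] at h
    omega
  · have h1 : j % len < len := Nat.mod_lt _ (by omega)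
    have h2 : j % len + 1 = len := by omega
    rw [← Nat.mod_add_mod, h2, Nat.mod_self] at h
    omega

lemma window_at_block {bs : List (List α)} (hr : 0 < r) (hbs : bs ≠ [])
    (hlen : ∀ b ∈ bs, b.length = r) (j : ℕ) :
    (bs.flatten.rotate (j * r)).take r = bget bs j ++ (bget bs (j + 1)).take 0 := by
  rw [flatten_rotate_mul bs hlen j]
  have hne : bs.rotate j ≠ [] := by
    intro h
    exact hbs (by simpa using congrArg List.length h)
  have := window_zero (bs.rotate j) hne (fun b hb => hlen b (List.mem_rotate.mp hb)) 0
    (by omega)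
  rw [List.rotate_zero] at this
  rw [this, List.drop_zero, bget_rotate bs hbs, bget_rotate bs hbs, Nat.zero_add,
    Nat.add_comm 1 j]

end Assembly

end SPV

open SPV in
/-- Every sparse paving matroid (an elementary split matroid in which every
hyperedge `H i` satisfies `|H i| = r` and `r_i = r - 1`) whose ground set is
partitioned into `k` pairwise disjoint bases admits a cyclic ordering in which
each basis of the partition forms an interval. -/
theorem sparsePaving_cyclic_ordering {α : Type*} [DecidableEq α] (M : Matroid α)
    (hfin : M.E.Finite) (r k q : ℕ)
    (H : Fin q → Set α)
    (hHS : ∀ i, H i ⊆ M.E)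
    (hHcard : ∀ i, (H i).ncard = r)
    (h1 : ∀ i j, i ≠ j → (H i ∩ H j).ncard + r ≤ (r - 1) + (r - 1))
    (h2 : ∀ i, r ≤ (M.E \ H i).ncard + (r - 1))
    (hbase : ∀ X ⊆ M.E, (M.IsBase X ↔ X.ncard = r ∧ ∀ i, (X ∩ H i).ncard ≤ r - 1))
    (B : Fin k → Set α) (hB : ∀ i, M.IsBase (B i))
    (hBdisj : ∀ i j, i ≠ j → Disjoint (B i) (B j))
    (hBU : (⋃ i, B i) = M.E) :
    ∃ L : List α, L.Nodup ∧ (↑L.toFinset : Set α) = M.E ∧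
      (∀ m : ℕ, M.IsBase (↑((L.rotate m).take r).toFinset : Set α)) ∧
      ∀ i : Fin k, ∃ m : ℕ, (↑((L.rotate m).take r).toFinset : Set α) = B i := by
  classical
  rcases Nat.eq_zero_or_pos k with hk0 | hk
  · -- k = 0 : the ground set is empty
    subst hk0
    have hE : M.E = ∅ := by
      rw [← hBU]
      exact Set.iUnion_of_empty _
    have hbe : M.IsBase ∅ := by
      obtain ⟨Bb, hBb⟩ := M.exists_isBase
      have : Bb ⊆ ∅ := hE ▸ hBb.subset_ground
      rwa [Set.subset_empty_iff.mp this] at hBb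
    refine ⟨[], by simp, by simp [hE], ?_, ?_⟩
    · intro m
      simp only [List.rotate_nil, List.take_nil, List.toFinset_nil, Finset.coe_empty]
      exact hbe
    · intro i
      exact absurd i.2 (by omega)
  rcases Nat.eq_zero_or_pos r with hr0 | hr
  · -- r = 0 : all bases are empty
    subst hr0
    have hBempty : ∀ i, B i = ∅ := by
      intro i
      have hsub := (hB i).subset_ground
      have := ((hbase (B i) hsub).mp (hB i)).1
      exact (Set.ncard_eq_zero (hfin.subset hsub)).mp this
    have hE : M.E = ∅ := by
      rw [← hBU]
      simp [hBempty]
    refine ⟨[], by simp, by simp [hE], ?_, ?_⟩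
    · intro m
      simp only [List.rotate_nil, List.take_nil, List.toFinset_nil, Finset.coe_empty]
      rw [← hBempty ⟨0, hk⟩]
      exact hB _
    · intro i
      refine ⟨0, ?_⟩
      simp [hBempty i]
  -- main case : k ≥ 1, r ≥ 1
  set HF : Fin q → Finset α := fun i => (hfin.subset (hHS i)).toFinset with hHF
  have hHFcoe : ∀ i, (↑(HF i) : Set α) = H i := fun i => Set.Finite.coe_toFinset _
  have hHFcard : ∀ i, (HF i).card = r := by
    intro i
    have := hHcard i
    rwa [← hHFcoe i, Set.ncard_coe_finset] at this
  have hdist : ∀ i j : Fin q, i ≠ j → (HF i ∩ HF j).card + 2 ≤ r := by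
    intro i j hij
    have := h1 i j hij
    have hco : (H i ∩ H j).ncard = (HF i ∩ HF j).card := by
      rw [← hHFcoe i, ← hHFcoe j, ← Finset.coe_inter, Set.ncard_coe_finset]
    rw [hco] at this
    omega
  set BF : Fin k → Finset α := fun i => (hfin.subset (hB i).subset_ground).toFinset with hBF
  have hBFcoe : ∀ i, (↑(BF i) : Set α) = B i := fun i => Set.Finite.coe_toFinset _
  have hBFcard : ∀ i, (BF i).card = r := by
    intro i
    have := ((hbase (B i) (hB i).subset_ground).mp (hB i)).1
    rwa [← hBFcoe i, Set.ncard_coe_finset] at this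
  have hBFdisj : ∀ i j, i ≠ j → Disjoint (BF i) (BF j) := by
    intro i j hij
    rw [← Finset.disjoint_coe, hBFcoe i, hBFcoe j]
    exact hBdisj i j hij
  have hBFnotH : ∀ j i, BF j ≠ HF i := by
    intro j i heq
    have hji := ((hbase (B j) (hB j).subset_ground).mp (hB j)).2 i
    have hBH : B j ∩ H i = B j := by
      rw [← hHFcoe i, ← heq, hBFcoe j, Set.inter_self]
    rw [hBH] at hji
    have := ((hbase (B j) (hB j).subset_ground).mp (hB j)).1
    omega
  -- the list of basis finsets
  set Bs : List (Finset α) := (List.finRange k).map BF with hBs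
  have hBsne : Bs ≠ [] := by
    rw [hBs]
    intro h
    have := congrArg List.length h
    simp at this
    omega
  have hBspw : List.Pairwise Disjoint Bs := by
    rw [hBs]
    apply List.Pairwise.map
    · exact fun {a b} h => h
    · exact ((List.nodup_finRange k).imp (fun {a b} hab => hBFdisj a b hab))
  obtain ⟨bs, hperm, hbnd, hblen, hG⟩ := core hr hdist Bs.length Bs rfl hBsne
    (by intro F hF; rw [hBs] at hF; obtain ⟨i, _, rfl⟩ := List.mem_map.mp hF; exact hBFcard i)
    hBspw
    (by intro F hF i; rw [hBs] at hF; obtain ⟨j, _, rfl⟩ := List.mem_map.mp hF; exact hBFnotH j i)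
  have hbslen : bs.length = k := by
    have := hperm.length_eq
    simp only [List.length_map, hBs, List.length_finRange] at this
    simpa using this
  have hbsne : bs ≠ [] := by
    intro h
    rw [h] at hbslen
    simp at hbslen
    omega
  have hpwbs : List.Pairwise Disjoint (bs.map List.toFinset) :=
    (hperm.pairwise_iff (fun {_ _} h => Disjoint.symm h)).mpr hBspw
  -- every block corresponds to a basis
  have hblockB : ∀ j : ℕ, ∃ i : Fin k, (bget bs j).toFinset = BF i := by
    intro j
    have hmem := bget_mem hbsne j
    have h1' : (bget bs j).toFinset ∈ bs.map List.toFinset := List.mem_map_of_mem hmem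
    have h2' : (bget bs j).toFinset ∈ Bs := hperm.subset h1'
    rw [hBs] at h2'
    obtain ⟨i, _, hi⟩ := List.mem_map.mp h2'
    exact ⟨i, hi.symm⟩
  set L : List α := bs.flatten with hL
  have hLnd : L.Nodup := by
    rw [hL, List.nodup_flatten]
    constructor
    · exact hbnd
    · have := List.pairwise_map.mp hpwbs
      exact this.imp (fun {a b} hab => List.disjoint_toFinset_iff_disjoint.mp hab)
  have hLfs : (↑L.toFinset : Set α) = M.E := by
    rw [← hBU]
    ext a
    simp only [Finset.coe_sort_coe, Finset.mem_coe, List.mem_toFinset, Set.mem_iUnion]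
    constructor
    · intro ha
      obtain ⟨b, hb, hab⟩ := List.mem_flatten.mp ha
      have h1' : b.toFinset ∈ bs.map List.toFinset := List.mem_map_of_mem hb
      have h2' : b.toFinset ∈ Bs := hperm.subset h1'
      rw [hBs] at h2'
      obtain ⟨i, _, hi⟩ := List.mem_map.mp h2'
      refine ⟨i, ?_⟩
      rw [← hBFcoe i, hi]
      simpa using hab
    · rintro ⟨i, hai⟩
      have h2' : BF i ∈ Bs := by
        rw [hBs]
        exact List.mem_map_of_mem (List.mem_finRange i)
      have h1' : BF i ∈ bs.map List.toFinset := hperm.symm.subset h2'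
      obtain ⟨b, hb, hib⟩ := List.mem_map.mp h1'
      rw [List.mem_flatten]
      refine ⟨b, hb, ?_⟩
      have : a ∈ (↑(BF i) : Set α) := by rw [hBFcoe i]; exact hai
      rw [← hib] at this
      simpa using this
  -- window goodness
  have hwindow : ∀ j t : ℕ, t < r →
      M.IsBase (↑((bget bs j).drop t ++ (bget bs (j + 1)).take t).toFinset : Set α) := by
    intro j t htr
    obtain ⟨i0, hi0⟩ := hblockB j
    rcases Nat.eq_zero_or_pos t with ht0 | ht0
    · subst ht0
      simp only [List.drop_zero, List.take_zero, List.append_nil]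
      rw [hi0, hBFcoe i0]
      exact hB i0
    · -- a true boundary window
      set w : List α := (bget bs j).drop t ++ (bget bs (j + 1)).take t with hw
      have hOk : Ok HF w := hG j t ht0 htr
      have hjnd : (bget bs j).Nodup := hbnd _ (bget_mem hbsne j)
      have hjnd' : (bget bs (j + 1)).Nodup := hbnd _ (bget_mem hbsne (j + 1))
      have hjlen : (bget bs j).length = r := hblen _ (bget_mem hbsne j)
      have hjlen' : (bget bs (j + 1)).length = r := hblen _ (bget_mem hbsne (j + 1))
      -- card of the window
      have hwcard : w.toFinset.card = r := by
        rcases Nat.eq_or_lt_of_le (Nat.one_le_iff_ne_zero.mpr (fun h =>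
          hbsne (List.length_eq_zero_iff.mp h))) with h1' | h1'
        · -- single block
          have hsame : bget bs (j + 1) = bget bs j := by
            have e1 : (j + 1) % bs.length = j % bs.length := by
              rw [← h1']
              simp [Nat.mod_one]
            calc bget bs (j + 1) = bget bs ((j + 1) % bs.length) := (bget_mod _ _).symm
            _ = bget bs (j % bs.length) := by rw [e1]
            _ = bget bs j := bget_mod _ _
          rw [hw, hsame]
          have : ((bget bs j).drop t ++ (bget bs j).take t).toFinset
              = (bget bs j).toFinset := by
            rw [List.toFinset_append, Finset.union_comm, take_union_drop_toFinset]
          rw [this, List.toFinset_card_of_nodup hjnd, hjlen]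
        · -- at least two blocks : adjacent blocks are disjoint
          have hdj : Disjoint (bget bs j).toFinset (bget bs (j + 1)).toFinset :=
            bget_disjoint hbsne hpwbs (fun h => succ_mod_ne h1' j h.symm)
          rw [hw, List.toFinset_append, Finset.card_union_of_disjoint, drop_toFinset_card hjnd,
            take_toFinset_card hjnd' (by omega), hjlen]
          · omega
          · exact Finset.disjoint_of_subset_left (drop_toFinset_subset _ _)
              (Finset.disjoint_of_subset_right (take_toFinset_subset _ _) hdj)
      have hwsub : (↑w.toFinset : Set α) ⊆ M.E := by
        rw [← hLfs]
        intro a ha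
        simp only [Finset.mem_coe, List.mem_toFinset] at ha ⊢
        rw [hw] at ha
        rcases List.mem_append.mp ha with h | h
        · exact List.mem_flatten.mpr ⟨bget bs j, bget_mem hbsne j, List.drop_subset _ _ h⟩
        · exact List.mem_flatten.mpr ⟨bget bs (j + 1), bget_mem hbsne (j + 1),
            List.take_subset _ _ h⟩
      rw [hbase _ hwsub]
      constructor
      · rw [Set.ncard_coe_finset, hwcard]
      · intro i
        have hne := hOk i
        have hco : (↑w.toFinset : Set α) ∩ H i = ↑(w.toFinset ∩ HF i) := by
          rw [Finset.coe_inter, hHFcoe i]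
        rw [hco, Set.ncard_coe_finset]
        by_contra hgt
        push_neg at hgt
        have hle : (w.toFinset ∩ HF i).card ≤ r := by
          calc (w.toFinset ∩ HF i).card ≤ (HF i).card :=
            Finset.card_le_card Finset.inter_subset_right
          _ = r := hHFcard i
        have hcap : (w.toFinset ∩ HF i).card = r := by omega
        have hinter : w.toFinset ∩ HF i = HF i := by
          apply Finset.eq_of_subset_of_card_le Finset.inter_subset_right
          rw [hcap, hHFcard i]
        have hsub2 : HF i ⊆ w.toFinset := by
          rw [← hinter]
          exact Finset.inter_subset_left
        have : w.toFinset = HF i := by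
          apply (Finset.eq_of_subset_of_card_le hsub2 ?_).symm
          rw [hwcard, hHFcard i]
        exact hne this
  refine ⟨L, hLnd, hLfs, ?_, ?_⟩
  · intro m
    obtain ⟨j, t, htr, heq⟩ := window_char hr bs hbsne hblen m
    rw [hL, heq]
    exact hwindow j t htr
  · intro i
    -- find the block equal to BF i
    have h2' : BF i ∈ Bs := by
      rw [hBs]
      exact List.mem_map_of_mem (List.mem_finRange i)
    have h1' : BF i ∈ bs.map List.toFinset := hperm.symm.subset h2'
    obtain ⟨b, hb, hib⟩ := List.mem_map.mp h1'
    obtain ⟨j, hbj⟩ := List.mem_iff_get.mp hb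
    refine ⟨(j : ℕ) * r, ?_⟩
    have hbg : bget bs (j : ℕ) = b := by
      rw [bget_eq_get bs hbsne]
      rw [← hbj]
      congr 1
      exact Fin.ext (Nat.mod_eq_of_lt j.2)
    rw [hL, window_at_block hr hbsne hblen (j : ℕ), List.take_zero, List.append_nil, hbg, hib,
      hBFcoe i]
end

section
/- Let M be a rank-r elementary split matroid with non-redundant representation, let H and H' be distinct hyperedges with values r_H and r_{H'}, and let R be a basis that is both H-tight and H'-tight. Then r_H + r_{H'} ≤ |R ∩ (H ∪ H')| + |H ∩ H'| and in particular s ≤ |H ∩ H'| ≤ r_H + r_{H'} − r for any s ≤ |H ∩ H'|; consequently if r_H ≤ r − s and r_{H'} ≤ r − s for some nonnegative integer s with s ≤ |H ∩ H'|, then s ≤ (r − s) + (r − s) − r, i.e., 3s ≤ r. -/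
/-- In a rank-`r` elementary split matroid with a non-redundant representation,
if a basis `R` is both `H i`-tight and `H j`-tight for distinct hyperedges, then
`r_i + r_j ≤ |R ∩ (H i ∪ H j)| + |H i ∩ H j|`; consequently, for any `s` with
`s ≤ |H i ∩ H j|`, `r_i ≤ r − s` and `r_j ≤ r − s`, we get `3s ≤ r`. -/
theorem doubly_tight_rank_bound {α : Type*} [DecidableEq α]
    (S : Finset α) (q r : ℕ) (H : Fin q → Finset α) (ri : Fin q → ℕ)
    (hHS : ∀ i, H i ⊆ S)
    (h1 : ∀ i j, i ≠ j → (H i ∩ H j).card + r ≤ ri i + ri j)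
    (h2 : ∀ i, r ≤ (S \ H i).card + ri i)
    (h3 : ∀ i, ri i + 1 ≤ r)
    (h4 : ∀ i, ri i + 1 ≤ (H i).card)
    (i j : Fin q) (hij : i ≠ j)
    (R : Finset α) (hRS : R ⊆ S) (hRcard : R.card = r)
    (hRbasis : ∀ m, (R ∩ H m).card ≤ ri m)
    (hti : (R ∩ H i).card = ri i) (htj : (R ∩ H j).card = ri j) :
    ri i + ri j ≤ (R ∩ (H i ∪ H j)).card + (H i ∩ H j).card ∧
    ∀ s : ℕ, s ≤ (H i ∩ H j).card → ri i ≤ r - s → ri j ≤ r - s → 3 * s ≤ r := by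
  constructor
  · have hu : (R ∩ H i) ∪ (R ∩ H j) = R ∩ (H i ∪ H j) := by
      ext x; simp [Finset.mem_inter, Finset.mem_union]; tauto
    have hi2 : (R ∩ H i) ∩ (R ∩ H j) ⊆ H i ∩ H j := by
      intro x hx
      simp only [Finset.mem_inter] at hx ⊢
      exact ⟨hx.1.2, hx.2.2⟩
    have := Finset.card_union_add_card_inter (R ∩ H i) (R ∩ H j)
    rw [hu] at this
    have := Finset.card_le_card hi2
    omega
  · intro s hs hsi hsj
    have := h1 i j hij
    have := h3 i
    omega
end
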